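/- arXiv:2004.00734 — 2 statements merged into one kernel-verified Lean document; each statement's English description precedes it below -/
import Mathlib

section
/- Let G be an HZ-graph with Δ ≥ 7 such that (i) for every two adjacent (Δ−1)-vertices x,y, N_Δ(x) = N_Δ(y); (ii) for every two adjacent Δ-vertices u,v, N_{Δ−1}(u) = N_{Δ−1}(v); and (iii) for any two Δ-vertices u,v with N_{Δ−1}(u) ≠ N_{Δ−1}(v) and N_{Δ−1}(u) ∩ N_{Δ−1}(v) ≠ ∅, |N_{Δ−1}(u) ∩ N_{Δ−1}(v)| = Δ−3. If there exist Δ-vertices u,v with N_{Δ−1}(u) ≠ N_{Δ−1}(v), then the set V_{Δ−1} of (Δ−1)-vertices is independent in G. -/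
open SimpleGraph

/-- A proper edge coloring of `G` with `k` colors. -/
def IsProperEdgeColoring {V : Type*} (G : SimpleGraph V) (k : ℕ) (C : Sym2 V → ℕ) : Prop :=
  (∀ e ∈ G.edgeSet, C e < k) ∧
    ∀ e₁ ∈ G.edgeSet, ∀ e₂ ∈ G.edgeSet, e₁ ≠ e₂ → (∃ v, v ∈ e₁ ∧ v ∈ e₂) → C e₁ ≠ C e₂

/-- The chromatic index of `G`. -/
noncomputable def chromaticIndex {V : Type*} (G : SimpleGraph V) : ℕ :=
  sInf {k | ∃ C, IsProperEdgeColoring G k C}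

set_option linter.unusedSectionVars false
set_option linter.unusedVariables false

section HZaux

open Finset

variable {V : Type*} [Fintype V] [DecidableEq V]
/-- Proper edge coloring of a finite edge set with colors `< k`. -/
def EC (S : Finset (Sym2 V)) (k : ℕ) (C : Sym2 V → ℕ) : Prop :=
  (∀ e ∈ S, C e < k) ∧
    ∀ e₁ ∈ S, ∀ e₂ ∈ S, e₁ ≠ e₂ → (∃ v, v ∈ e₁ ∧ v ∈ e₂) → C e₁ ≠ C e₂

def ECol (S : Finset (Sym2 V)) (k : ℕ) : Prop := ∃ C, EC S k C

def ds (S : Finset (Sym2 V)) (z : V) : ℕ := (S.filter (fun e => z ∈ e)).card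

def pal (S : Finset (Sym2 V)) (C : Sym2 V → ℕ) (z : V) : Finset ℕ :=
  (S.filter (fun e => z ∈ e)).image C

def mis (S : Finset (Sym2 V)) (k : ℕ) (C : Sym2 V → ℕ) (z : V) : Finset ℕ :=
  Finset.range k \ pal S C z

lemma ecol_empty (k : ℕ) : ECol (∅ : Finset (Sym2 V)) k :=
  ⟨fun _ => 0, fun e he => absurd he (Finset.notMem_empty e),
   fun e₁ he₁ => absurd he₁ (Finset.notMem_empty e₁)⟩

lemma ecol_mono {S T : Finset (Sym2 V)} {k : ℕ} (hST : S ⊆ T) (h : ECol T k) : ECol S k := by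
  obtain ⟨C, h1, h2⟩ := h
  exact ⟨C, fun e he => h1 e (hST he), fun e₁ he₁ e₂ he₂ => h2 e₁ (hST he₁) e₂ (hST he₂)⟩

/-- endpoint decomposition -/
lemma mem_decomp {S : Finset (Sym2 V)} (hnd : ∀ e ∈ S, ¬ e.IsDiag) {e : Sym2 V} {z : V}
    (he : e ∈ S) (hz : z ∈ e) : ∃ u, u ≠ z ∧ e = s(z, u) := by
  induction e with
  | _ a b =>
    rcases Sym2.mem_iff.mp hz with rfl | rfl
    · exact ⟨b, fun hb => (hnd _ he) (by simp [hb, Sym2.mk_isDiag_iff]), rfl⟩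
    · exact ⟨a, fun ha => (hnd _ he) (by simp [ha, Sym2.mk_isDiag_iff]), Sym2.eq_swap⟩

lemma pal_card {S : Finset (Sym2 V)} {k : ℕ} {C : Sym2 V → ℕ} (hC : EC S k C) (z : V) :
    (pal S C z).card = ds S z := by
  apply Finset.card_image_of_injOn
  intro e₁ he₁ e₂ he₂ hcc
  simp only [Finset.mem_coe, Finset.mem_filter] at he₁ he₂
  by_contra hne
  exact hC.2 e₁ he₁.1 e₂ he₂.1 hne ⟨z, he₁.2, he₂.2⟩ hcc

lemma pal_subset_range {S : Finset (Sym2 V)} {k : ℕ} {C : Sym2 V → ℕ} (hC : EC S k C) (z : V) :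
    pal S C z ⊆ Finset.range k := by
  intro c hc
  obtain ⟨e, he, rfl⟩ := Finset.mem_image.mp hc
  exact Finset.mem_range.mpr (hC.1 e (Finset.mem_filter.mp he).1)

lemma mis_card {S : Finset (Sym2 V)} {k : ℕ} {C : Sym2 V → ℕ} (hC : EC S k C) (z : V) :
    (mis S k C z).card = k - ds S z := by
  rw [mis, Finset.card_sdiff_of_subset (pal_subset_range hC z), Finset.card_range, pal_card hC]

lemma mis_lt {S : Finset (Sym2 V)} {k : ℕ} {C : Sym2 V → ℕ} {z : V} {c : ℕ}
    (hc : c ∈ mis S k C z) : c < k := Finset.mem_range.mp (Finset.mem_sdiff.mp hc).1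

lemma mem_pal_of_mem {S : Finset (Sym2 V)} {C : Sym2 V → ℕ} {z : V} {e : Sym2 V}
    (he : e ∈ S) (hz : z ∈ e) : C e ∈ pal S C z :=
  Finset.mem_image_of_mem C (Finset.mem_filter.mpr ⟨he, hz⟩)

lemma not_mem_pal_of_mis {S : Finset (Sym2 V)} {k : ℕ} {C : Sym2 V → ℕ} {z : V} {c : ℕ}
    (hc : c ∈ mis S k C z) : c ∉ pal S C z := (Finset.mem_sdiff.mp hc).2

lemma mem_mis {S : Finset (Sym2 V)} {k : ℕ} {C : Sym2 V → ℕ} {z : V} {c : ℕ}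
    (hk : c < k) (hp : c ∉ pal S C z) : c ∈ mis S k C z :=
  Finset.mem_sdiff.mpr ⟨Finset.mem_range.mpr hk, hp⟩

lemma mis_ne_of_colored {S : Finset (Sym2 V)} {k : ℕ} {C : Sym2 V → ℕ} {z : V} {c : ℕ}
    (hc : c ∈ mis S k C z) {e : Sym2 V} (he : e ∈ S) (hz : z ∈ e) : C e ≠ c := by
  intro h
  exact not_mem_pal_of_mis hc (h ▸ mem_pal_of_mem he hz)

/-! ### Recoloring one edge -/

lemma sym2_mk_eq {v z u : V} (hz : z ≠ v) (h : s(v,z) = s(v,u)) : z = u := by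
  rw [Sym2.eq_iff] at h
  rcases h with ⟨h1, h2⟩ | ⟨h1, h2⟩
  · exact h2
  · exact absurd h2 hz

lemma pal_update_not_mem {S : Finset (Sym2 V)} {C : Sym2 V → ℕ} {z : V} {e₀ : Sym2 V}
    (hz : z ∉ e₀) (α : ℕ) : pal S (Function.update C e₀ α) z = pal S C z := by
  apply Finset.image_congr
  intro e he
  simp only [Finset.mem_coe, Finset.mem_filter] at he
  have : e ≠ e₀ := fun h => hz (h ▸ he.2)
  simp [Function.update_of_ne this]

lemma mis_update_not_mem {S : Finset (Sym2 V)} {k : ℕ} {C : Sym2 V → ℕ} {z : V} {e₀ : Sym2 V}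
    (hz : z ∉ e₀) (α : ℕ) : mis S k (Function.update C e₀ α) z = mis S k C z := by
  rw [mis, mis, pal_update_not_mem hz]

/-- After recoloring edge `e₀` (at endpoint `z`) to a color `α ≠` its old color,
the old color becomes missing at `z`. -/
lemma old_color_mis {S : Finset (Sym2 V)} {k : ℕ} {C : Sym2 V → ℕ} (hC : EC S k C)
    {z : V} {e₀ : Sym2 V} (he₀ : e₀ ∈ S) (hz : z ∈ e₀) {α : ℕ} (hne : α ≠ C e₀)
    (hk : C e₀ < k) : C e₀ ∈ mis S k (Function.update C e₀ α) z := by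
  apply mem_mis hk
  intro hmem
  obtain ⟨e, he, hce⟩ := Finset.mem_image.mp hmem
  rw [Finset.mem_filter] at he
  by_cases h : e = e₀
  · rw [h, Function.update_self] at hce; exact hne hce
  · rw [Function.update_of_ne h] at hce
    exact hC.2 e he.1 e₀ he₀ h ⟨z, he.2, hz⟩ hce

/-- Recoloring an edge of `S` with a color missing at both its endpoints keeps properness. -/
lemma EC_update {S : Finset (Sym2 V)} {k : ℕ} {C : Sym2 V → ℕ} (hC : EC S k C)
    {v u : V} (he₀ : s(v,u) ∈ S) {α : ℕ}
    (hv : α ∈ mis S k C v) (hu : α ∈ mis S k C u) :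
    EC S k (Function.update C s(v,u) α) := by
  constructor
  · intro e he
    by_cases h : e = s(v,u)
    · rw [h, Function.update_self]; exact mis_lt hv
    · rw [Function.update_of_ne h]; exact hC.1 e he
  · intro e₁ he₁ e₂ he₂ hne ⟨x, hx1, hx2⟩
    by_cases h1 : e₁ = s(v,u) <;> by_cases h2 : e₂ = s(v,u)
    · exact absurd (h1.trans h2.symm) hne
    · rw [h1, Function.update_self, Function.update_of_ne h2]
      subst h1
      have hx : x = v ∨ x = u := Sym2.mem_iff.mp hx1
      intro hcc
      rcases hx with rfl | rfl
      · exact not_mem_pal_of_mis hv (hcc ▸ mem_pal_of_mem he₂ hx2)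
      · exact not_mem_pal_of_mis hu (hcc ▸ mem_pal_of_mem he₂ hx2)
    · rw [h2, Function.update_self, Function.update_of_ne h1]
      subst h2
      have hx : x = v ∨ x = u := Sym2.mem_iff.mp hx2
      intro hcc
      rcases hx with rfl | rfl
      · exact not_mem_pal_of_mis hv (hcc ▸ mem_pal_of_mem he₁ hx1)
      · exact not_mem_pal_of_mis hu (hcc ▸ mem_pal_of_mem he₁ hx1)
    · rw [Function.update_of_ne h1, Function.update_of_ne h2]
      exact hC.2 e₁ he₁ e₂ he₂ hne ⟨x, hx1, hx2⟩

/-- Coloring a new edge with a color missing at both endpoints keeps properness. -/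
lemma EC_insert {S : Finset (Sym2 V)} {k : ℕ} {C : Sym2 V → ℕ} (hC : EC S k C)
    {v u : V} (he₀ : s(v,u) ∉ S) {α : ℕ} (hk : α < k)
    (hv : α ∈ mis S k C v) (hu : α ∈ mis S k C u) :
    EC (insert s(v,u) S) k (Function.update C s(v,u) α) := by
  constructor
  · intro e he
    rcases Finset.mem_insert.mp he with rfl | he
    · rw [Function.update_self]; exact hk
    · have : e ≠ s(v,u) := fun h => he₀ (h ▸ he)
      rw [Function.update_of_ne this]; exact hC.1 e he
  · intro e₁ he₁ e₂ he₂ hne ⟨x, hx1, hx2⟩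
    rcases Finset.mem_insert.mp he₁ with rfl | he₁' <;> rcases Finset.mem_insert.mp he₂ with h2 | he₂'
    · exact absurd h2.symm hne
    · rw [Function.update_self, Function.update_of_ne (fun h : _ = s(v,u) => he₀ (h ▸ he₂'))]
      have hx : x = v ∨ x = u := Sym2.mem_iff.mp hx1
      intro hcc
      rcases hx with rfl | rfl
      · exact not_mem_pal_of_mis hv (hcc ▸ mem_pal_of_mem he₂' hx2)
      · exact not_mem_pal_of_mis hu (hcc ▸ mem_pal_of_mem he₂' hx2)
    · subst h2
      rw [Function.update_self, Function.update_of_ne (fun h : _ = s(v,u) => he₀ (h ▸ he₁'))]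
      have hx : x = v ∨ x = u := Sym2.mem_iff.mp hx2
      intro hcc
      rcases hx with rfl | rfl
      · exact not_mem_pal_of_mis hv (hcc ▸ mem_pal_of_mem he₁' hx1)
      · exact not_mem_pal_of_mis hu (hcc ▸ mem_pal_of_mem he₁' hx1)
    · rw [Function.update_of_ne (fun h : _ = s(v,u) => he₀ (h ▸ he₁')),
        Function.update_of_ne (fun h : _ = s(v,u) => he₀ (h ▸ he₂'))]
      exact hC.2 e₁ he₁' e₂ he₂' hne ⟨x, hx1, hx2⟩

/-! ### Vizing fans (chains) -/

inductive RCh (T : Finset (Sym2 V)) (k : ℕ) (v w₀ : V) (C : Sym2 V → ℕ) : V → List V → Prop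
  | base : RCh T k v w₀ C w₀ []
  | cons {x : V} {l : List V} {u : V} : RCh T k v w₀ C x l → s(v,u) ∈ T →
      C s(v,u) ∈ mis T k C x → u ∉ x :: l → RCh T k v w₀ C u (x :: l)

variable {T : Finset (Sym2 V)} {k : ℕ} {v w₀ : V} {C : Sym2 V → ℕ}

lemma RCh.w₀_mem {u : V} {l : List V} (h : RCh T k v w₀ C u l) : w₀ ∈ u :: l := by
  induction h with
  | base => simp
  | cons _ _ _ _ ih => exact List.mem_cons_of_mem _ ih

lemma RCh.ne_v (hnd : ∀ e ∈ T, ¬ e.IsDiag) (hw₀ : w₀ ≠ v) {u : V} {l : List V}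
    (h : RCh T k v w₀ C u l) : ∀ z ∈ u :: l, z ≠ v := by
  induction h with
  | base => intro z hz; simp at hz; subst hz; exact hw₀
  | cons _ he _ _ ih =>
    intro z hz
    rcases List.mem_cons.mp hz with rfl | hz
    · intro hzv; subst hzv
      exact hnd _ he (by simp [Sym2.mk_isDiag_iff])
    · exact ih z hz

lemma RCh.mem_T {u : V} {l : List V} (h : RCh T k v w₀ C u l) :
    ∀ z ∈ u :: l, z = w₀ ∨ s(v,z) ∈ T := by
  induction h with
  | base => intro z hz; simp at hz; subst hz; exact Or.inl rfl
  | cons _ he _ _ ih =>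
    intro z hz
    rcases List.mem_cons.mp hz with rfl | hz
    · exact Or.inr he
    · exact ih z hz

lemma RCh.trunc {x : V} {l : List V} (h : RCh T k v w₀ C x l) :
    ∀ u ∈ x :: l, ∃ l', RCh T k v w₀ C u l' := by
  induction h with
  | base => intro u hu; simp at hu; subst hu; exact ⟨[], RCh.base⟩
  | cons hsub he hm hnd ih =>
    intro u hu
    rcases List.mem_cons.mp hu with rfl | hu
    · exact ⟨_, RCh.cons hsub he hm hnd⟩
    · exact ih u hu

lemma RCh.congr {C' : Sym2 V → ℕ} {u : V} {l : List V} (h : RCh T k v w₀ C u l)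
    (he : ∀ z ∈ u :: l, C' s(v,z) = C s(v,z))
    (hm : ∀ z ∈ l, mis T k C' z = mis T k C z) : RCh T k v w₀ C' u l := by
  induction h with
  | base => exact RCh.base
  | @cons x l u hsub hedge hmis hnodup ih =>
    refine RCh.cons (ih (fun z hz => he z (List.mem_cons_of_mem _ hz))
      (fun z hz => hm z (List.mem_cons_of_mem _ hz))) hedge ?_ hnodup
    rw [he u (List.mem_cons_self), hm x (List.mem_cons_self)]
    exact hmis

/-- The fundamental "shift the fan" lemma: if some fan vertex misses a color also
missing at the center `v`, the whole edge set (with the uncolored edge back in) is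
`k`-colorable. -/
lemma RCh.shift (hnd : ∀ e ∈ T, ¬ e.IsDiag) (hw₀ : w₀ ≠ v) (hvT : s(v,w₀) ∉ T) :
    ∀ (l : List V) (C : Sym2 V → ℕ) (u : V) (α : ℕ), EC T k C → RCh T k v w₀ C u l →
      α ∈ mis T k C u → α ∈ mis T k C v → ECol (insert s(v,w₀) T) k := by
  intro l
  induction l with
  | nil =>
    intro C u α hC h hu hv
    have hu' : u = w₀ := by cases h; rfl
    subst hu'
    refine ⟨Function.update C s(v,u) α, ?_⟩
    have : s(v,u) = s(u,v) := Sym2.eq_swap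
    exact EC_insert hC hvT (mis_lt hu) hv hu
  | cons x l' ih =>
    intro C u α hC h hu hv
    cases h with
    | cons hsub hedge hmis hnodup =>
      have hzs : ∀ z ∈ x :: l', z ≠ v := fun z hz =>
        (RCh.cons hsub hedge hmis hnodup).ne_v hnd hw₀ z (List.mem_cons_of_mem _ hz)
      have hzu : ∀ z ∈ x :: l', z ≠ u := fun z hz h => hnodup (h ▸ hz)
      have hznot : ∀ z ∈ x :: l', z ∉ (s(v,u) : Sym2 V) := by
        intro z hz hmem
        rcases Sym2.mem_iff.mp hmem with h | h
        · exact hzs z hz h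
        · exact hzu z hz h
      set C' := Function.update C s(v,u) α with hC'def
      have hC' : EC T k C' := EC_update hC hedge hv hu
      have hch' : RCh T k v w₀ C' x l' := by
        refine hsub.congr (fun z hz => ?_) (fun z hz => ?_)
        · exact Function.update_of_ne (by
            intro hq
            exact hzu z hz (sym2_mk_eq (hzs z hz) hq)) _ _
        · exact mis_update_not_mem (hznot z (List.mem_cons_of_mem _ hz)) _
      have hγx : C s(v,u) ∈ mis T k C' x := by
        have : mis T k C' x = mis T k C x :=
          mis_update_not_mem (hznot x (List.mem_cons_self)) _
        rw [this]; exact hmis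
      have hγv : C s(v,u) ∈ mis T k C' v := by
        refine old_color_mis hC hedge (by simp) ?_ (hC.1 _ hedge)
        intro hq
        exact not_mem_pal_of_mis hv (hq ▸ mem_pal_of_mem hedge (by simp))
      have hγx' : C' s(v,u) = α := Function.update_self _ _ _
      exact ih C' x (C s(v,u)) hC' hch' hγx hγv

/-! ### Kempe chains -/

def sw (α β c : ℕ) : ℕ := if c = α then β else if c = β then α else c

lemma sw_sw (α β c : ℕ) : sw α β (sw α β c) = c := by
  unfold sw
  by_cases h1 : c = α
  · by_cases h2 : β = α <;> simp [h1, h2]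
  · by_cases h2 : c = β <;> simp [h1, h2]

lemma sw_inj (α β : ℕ) : Function.Injective (sw α β) :=
  Function.LeftInverse.injective (g := sw α β) (fun c => sw_sw α β c)

lemma sw_mem {α β c : ℕ} (h : c = α ∨ c = β) : sw α β c = α ∨ sw α β c = β := by
  unfold sw
  rcases h with rfl | rfl
  · simp
  · by_cases h2 : c = α <;> simp [h2]

lemma sw_alpha {α β : ℕ} : sw α β α = β := by simp [sw]

lemma sw_beta {α β : ℕ} (hαβ : α ≠ β) : sw α β β = α := by
  simp [sw, Ne.symm hαβ]

@[reducible]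
def KG (T : Finset (Sym2 V)) (C : Sym2 V → ℕ) (α β : ℕ) : SimpleGraph V where
  Adj a b := a ≠ b ∧ s(a,b) ∈ T ∧ (C s(a,b) = α ∨ C s(a,b) = β)
  symm := ⟨by
    intro a b ⟨h1, h2, h3⟩
    rw [Sym2.eq_swap] at h2 h3
    exact ⟨h1.symm, h2, h3⟩⟩
  loopless := ⟨fun a h => h.1 rfl⟩

open Classical in
noncomputable def KC (T : Finset (Sym2 V)) (C : Sym2 V → ℕ) (α β : ℕ) (x₀ : V) :
    Sym2 V → ℕ := fun e =>
  if e ∈ T ∧ (C e = α ∨ C e = β) ∧ (∃ a ∈ e, (KG T C α β).Reachable x₀ a)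
  then sw α β (C e) else C e

variable {T : Finset (Sym2 V)} {C : Sym2 V → ℕ} {α β : ℕ} {x₀ : V}

/-- If an edge satisfies the swap condition, then all its members are reachable. -/
lemma reach_of_edge {e : Sym2 V} (he : e ∈ T) (hc : C e = α ∨ C e = β)
    (hr : ∃ a ∈ e, (KG T C α β).Reachable x₀ a) {z : V} (hz : z ∈ e) :
    (KG T C α β).Reachable x₀ z := by
  obtain ⟨a, ha, hra⟩ := hr
  induction e with
  | _ p q =>
    rcases Sym2.mem_iff.mp ha with rfl | rfl <;> rcases Sym2.mem_iff.mp hz with rfl | rfl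
    · exact hra
    · by_cases hpq : a = z
      · exact hpq ▸ hra
      · exact hra.trans (SimpleGraph.Adj.reachable ⟨hpq, he, hc⟩)
    · by_cases hpq : z = a
      · exact hpq ▸ hra
      · exact hra.trans (SimpleGraph.Adj.reachable (SimpleGraph.Adj.symm ⟨hpq, he, hc⟩))
    · exact hra

lemma KC_eq_of_not_swap {e : Sym2 V}
    (h : ¬ (e ∈ T ∧ (C e = α ∨ C e = β) ∧ ∃ a ∈ e, (KG T C α β).Reachable x₀ a)) :
    KC T C α β x₀ e = C e := by
  unfold KC
  split <;> first | (exfalso; exact h (by assumption)) | rfl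

lemma KC_eq_of_swap {e : Sym2 V}
    (h : e ∈ T ∧ (C e = α ∨ C e = β) ∧ ∃ a ∈ e, (KG T C α β).Reachable x₀ a) :
    KC T C α β x₀ e = sw α β (C e) := by
  unfold KC
  split <;> first | rfl | (exfalso; exact (by assumption) h)

/-- Non-reachable vertices: incident edges are untouched. -/
lemma KC_eq_at_unreached {z : V} (hz : ¬ (KG T C α β).Reachable x₀ z) {e : Sym2 V}
    (hze : z ∈ e) : KC T C α β x₀ e = C e := by
  apply KC_eq_of_not_swap
  rintro ⟨h1, h2, h3⟩
  exact hz (reach_of_edge h1 h2 ⟨h3.choose, h3.choose_spec.1, h3.choose_spec.2⟩ hze)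

/-- The Kempe swap preserves properness. -/
lemma EC_KC {k : ℕ} (hC : EC T k C) (hα : α < k) (hβ : β < k) :
    EC T k (KC T C α β x₀) := by
  constructor
  · intro e he
    by_cases h : e ∈ T ∧ (C e = α ∨ C e = β) ∧ ∃ a ∈ e, (KG T C α β).Reachable x₀ a
    · rw [KC_eq_of_swap h]
      rcases sw_mem h.2.1 with h' | h' <;> rw [h']
      · exact hα
      · exact hβ
    · rw [KC_eq_of_not_swap h]; exact hC.1 e he
  · intro e₁ he₁ e₂ he₂ hne hsh
    obtain ⟨x, hx1, hx2⟩ := hsh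
    have hcc : C e₁ ≠ C e₂ := hC.2 e₁ he₁ e₂ he₂ hne ⟨x, hx1, hx2⟩
    by_cases h1 : e₁ ∈ T ∧ (C e₁ = α ∨ C e₁ = β) ∧ ∃ a ∈ e₁, (KG T C α β).Reachable x₀ a <;>
      by_cases h2 : e₂ ∈ T ∧ (C e₂ = α ∨ C e₂ = β) ∧ ∃ a ∈ e₂, (KG T C α β).Reachable x₀ a
    · rw [KC_eq_of_swap h1, KC_eq_of_swap h2]
      exact fun h => hcc (sw_inj α β h)
    · rw [KC_eq_of_swap h1, KC_eq_of_not_swap h2]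
      by_cases hc2 : C e₂ = α ∨ C e₂ = β
      · exfalso
        exact h2 ⟨he₂, hc2, x, hx2, reach_of_edge h1.1 h1.2.1 h1.2.2 hx1⟩
      · intro h
        rcases sw_mem h1.2.1 with h' | h' <;> rw [h'] at h
        · exact hc2 (Or.inl h.symm)
        · exact hc2 (Or.inr h.symm)
    · rw [KC_eq_of_not_swap h1, KC_eq_of_swap h2]
      by_cases hc1 : C e₁ = α ∨ C e₁ = β
      · exfalso
        exact h1 ⟨he₁, hc1, x, hx1, reach_of_edge h2.1 h2.2.1 h2.2.2 hx2⟩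
      · intro h
        rcases sw_mem h2.2.1 with h' | h' <;> rw [h'] at h
        · exact hc1 (Or.inl h)
        · exact hc1 (Or.inr h)
    · rw [KC_eq_of_not_swap h1, KC_eq_of_not_swap h2]; exact hcc

lemma pal_KC_unreached {z : V} (hz : ¬ (KG T C α β).Reachable x₀ z) :
    pal T (KC T C α β x₀) z = pal T C z := by
  apply Finset.image_congr
  intro e he
  simp only [Finset.mem_coe, Finset.mem_filter] at he
  exact KC_eq_at_unreached hz he.2

lemma mis_KC_unreached {k : ℕ} {z : V} (hz : ¬ (KG T C α β).Reachable x₀ z) :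
    mis T k (KC T C α β x₀) z = mis T k C z := by
  rw [mis, mis, pal_KC_unreached hz]

/-- At a reachable vertex, colors other than α,β are unaffected. -/
lemma pal_KC_reached_other {z : V} (hz : (KG T C α β).Reachable x₀ z) {γ : ℕ}
    (hγα : γ ≠ α) (hγβ : γ ≠ β) :
    (γ ∈ pal T (KC T C α β x₀) z ↔ γ ∈ pal T C z) := by
  constructor
  · intro h
    obtain ⟨e, he, hce⟩ := Finset.mem_image.mp h
    rw [Finset.mem_filter] at he
    by_cases hs : e ∈ T ∧ (C e = α ∨ C e = β) ∧ ∃ a ∈ e, (KG T C α β).Reachable x₀ a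
    · exfalso
      rw [KC_eq_of_swap hs] at hce
      rcases sw_mem hs.2.1 with h' | h' <;> rw [h'] at hce
      · exact hγα hce.symm
      · exact hγβ hce.symm
    · rw [KC_eq_of_not_swap hs] at hce
      exact hce ▸ mem_pal_of_mem he.1 he.2
  · intro h
    obtain ⟨e, he, hce⟩ := Finset.mem_image.mp h
    rw [Finset.mem_filter] at he
    have hs : ¬ (e ∈ T ∧ (C e = α ∨ C e = β) ∧ ∃ a ∈ e, (KG T C α β).Reachable x₀ a) := by
      rintro ⟨_, hc, _⟩
      rcases hc with hc | hc <;> rw [hce] at hc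
      · exact hγα hc
      · exact hγβ hc
    have : KC T C α β x₀ e = γ := by rw [KC_eq_of_not_swap hs]; exact hce
    exact this ▸ mem_pal_of_mem (C := KC T C α β x₀) he.1 he.2

/-- At a reachable vertex, α is present after the swap iff β was present before. -/
lemma pal_KC_reached_swap {z : V} (hz : (KG T C α β).Reachable x₀ z) (hαβ : α ≠ β) :
    (α ∈ pal T (KC T C α β x₀) z ↔ β ∈ pal T C z) ∧
    (β ∈ pal T (KC T C α β x₀) z ↔ α ∈ pal T C z) := by
  constructor
  · constructor
    · intro h
      obtain ⟨e, he, hce⟩ := Finset.mem_image.mp h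
      rw [Finset.mem_filter] at he
      by_cases hs : e ∈ T ∧ (C e = α ∨ C e = β) ∧ ∃ a ∈ e, (KG T C α β).Reachable x₀ a
      · rw [KC_eq_of_swap hs] at hce
        rcases hs.2.1 with h' | h'
        · rw [h', sw_alpha] at hce; exact absurd hce.symm hαβ
        · rw [← h']; exact mem_pal_of_mem he.1 he.2
      · rw [KC_eq_of_not_swap hs] at hce
        exfalso
        exact hs ⟨he.1, Or.inl hce, z, he.2, hz⟩
    · intro h
      obtain ⟨e, he, hce⟩ := Finset.mem_image.mp h
      rw [Finset.mem_filter] at he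
      have hs : e ∈ T ∧ (C e = α ∨ C e = β) ∧ ∃ a ∈ e, (KG T C α β).Reachable x₀ a :=
        ⟨he.1, Or.inr hce, z, he.2, hz⟩
      have : KC T C α β x₀ e = α := by rw [KC_eq_of_swap hs, hce, sw_beta hαβ]
      have h2 := mem_pal_of_mem (C := KC T C α β x₀) he.1 he.2
      rwa [this] at h2
  · constructor
    · intro h
      obtain ⟨e, he, hce⟩ := Finset.mem_image.mp h
      rw [Finset.mem_filter] at he
      by_cases hs : e ∈ T ∧ (C e = α ∨ C e = β) ∧ ∃ a ∈ e, (KG T C α β).Reachable x₀ a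
      · rw [KC_eq_of_swap hs] at hce
        rcases hs.2.1 with h' | h'
        · rw [← h']; exact mem_pal_of_mem he.1 he.2
        · rw [h', sw_beta hαβ] at hce; exact absurd hce hαβ
      · rw [KC_eq_of_not_swap hs] at hce
        exfalso
        exact hs ⟨he.1, Or.inr hce, z, he.2, hz⟩
    · intro h
      obtain ⟨e, he, hce⟩ := Finset.mem_image.mp h
      rw [Finset.mem_filter] at he
      have hs : e ∈ T ∧ (C e = α ∨ C e = β) ∧ ∃ a ∈ e, (KG T C α β).Reachable x₀ a :=
        ⟨he.1, Or.inl hce, z, he.2, hz⟩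
      have : KC T C α β x₀ e = β := by rw [KC_eq_of_swap hs, hce, sw_alpha]
      have h2 := mem_pal_of_mem (C := KC T C α β x₀) he.1 he.2
      rwa [this] at h2

lemma mis_KC_reached_other {k : ℕ} {z : V} (hz : (KG T C α β).Reachable x₀ z) {γ : ℕ}
    (hγα : γ ≠ α) (hγβ : γ ≠ β) :
    (γ ∈ mis T k (KC T C α β x₀) z ↔ γ ∈ mis T k C z) := by
  unfold mis
  rw [Finset.mem_sdiff, Finset.mem_sdiff, pal_KC_reached_other hz hγα hγβ]

lemma mis_KC_reached_beta {k : ℕ} {z : V} (hz : (KG T C α β).Reachable x₀ z) (hαβ : α ≠ β)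
    (h : α ∈ mis T k C z) (hβk : β < k) : β ∈ mis T k (KC T C α β x₀) z := by
  apply mem_mis hβk
  intro hp
  exact not_mem_pal_of_mis h ((pal_KC_reached_swap hz hαβ).2.mp hp)

/-! ### A connected graph of max degree ≤ 2 cannot have three ends -/

lemma nest_lemma {K : SimpleGraph V} [DecidableRel K.Adj] (hdeg : ∀ z, K.degree z ≤ 2)
    {b c : V} : ∀ {u : V} (p : K.Walk u b) (q : K.Walk u c) (X : Finset V),
    p.IsPath → q.IsPath → (∀ x ∈ X, x ∉ p.support) → (∀ x ∈ X, x ∉ q.support) →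
    (K.neighborFinset u \ X).card ≤ 1 →
    (∀ z ∈ p.support, z ∈ q.support) ∨ (∀ z ∈ q.support, z ∈ p.support) := by
  intro u p
  induction p with
  | nil =>
    intro q X _ _ _ _ _
    left
    intro z hz
    simp only [SimpleGraph.Walk.support_nil, List.mem_singleton] at hz
    subst hz
    exact q.start_mem_support
  | @cons u y b h p' ih =>
    intro q X hp hq hXp hXq hcard
    cases q with
    | nil =>
      right
      intro z hz
      simp only [SimpleGraph.Walk.support_nil, List.mem_singleton] at hz
      subst hz
      exact (SimpleGraph.Walk.cons h p').start_mem_support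
    | @cons _ z _ h' q' =>
      have hy : y ∈ K.neighborFinset u \ X := by
        rw [Finset.mem_sdiff, SimpleGraph.mem_neighborFinset]
        refine ⟨h, fun hyX => hXp y hyX ?_⟩
        simp [SimpleGraph.Walk.support_cons]
      have hz : z ∈ K.neighborFinset u \ X := by
        rw [Finset.mem_sdiff, SimpleGraph.mem_neighborFinset]
        refine ⟨h', fun hzX => hXq z hzX ?_⟩
        simp [SimpleGraph.Walk.support_cons]
      have hyz : y = z := by
        have := Finset.card_le_one.mp hcard _ hy _ hz
        exact this
      subst hyz
      have hp' : p'.IsPath := ((SimpleGraph.Walk.cons_isPath_iff h p').mp hp).1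
      have hup' : u ∉ p'.support := ((SimpleGraph.Walk.cons_isPath_iff h p').mp hp).2
      have hq' : q'.IsPath := ((SimpleGraph.Walk.cons_isPath_iff h' q').mp hq).1
      have huq' : u ∉ q'.support := ((SimpleGraph.Walk.cons_isPath_iff h' q').mp hq).2
      have hXp' : ∀ x ∈ insert u X, x ∉ p'.support := by
        intro x hx
        rcases Finset.mem_insert.mp hx with rfl | hx
        · exact hup'
        · intro hmem
          exact hXp x hx (by rw [SimpleGraph.Walk.support_cons]; exact List.mem_cons_of_mem _ hmem)
      have hXq' : ∀ x ∈ insert u X, x ∉ q'.support := by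
        intro x hx
        rcases Finset.mem_insert.mp hx with rfl | hx
        · exact huq'
        · intro hmem
          exact hXq x hx (by rw [SimpleGraph.Walk.support_cons]; exact List.mem_cons_of_mem _ hmem)
      have hcard' : (K.neighborFinset y \ insert u X).card ≤ 1 := by
        have hsub : K.neighborFinset y \ insert u X ⊆ (K.neighborFinset y).erase u := by
          intro w hw
          rw [Finset.mem_sdiff] at hw
          exact Finset.mem_erase.mpr ⟨fun hwu => hw.2 (hwu ▸ Finset.mem_insert_self u X), hw.1⟩
        calc (K.neighborFinset y \ insert u X ).card ≤ ((K.neighborFinset y).erase u).card :=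
              Finset.card_le_card hsub
          _ = (K.neighborFinset y).card - 1 :=
              Finset.card_erase_of_mem (by rw [SimpleGraph.mem_neighborFinset]; exact h.symm)
          _ ≤ 1 := by have := hdeg y; rw [SimpleGraph.degree] at this; omega
      rcases ih q' (insert u X) hp' hq' hXp' hXq' hcard' with hc | hc
      · left
        intro w hw
        rw [SimpleGraph.Walk.support_cons] at hw ⊢
        rcases List.mem_cons.mp hw with rfl | hw
        · exact List.mem_cons_self
        · exact List.mem_cons_of_mem _ (hc w hw)
      · right
        intro w hw
        rw [SimpleGraph.Walk.support_cons] at hw ⊢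
        rcases List.mem_cons.mp hw with rfl | hw
        · exact List.mem_cons_self
        · exact List.mem_cons_of_mem _ (hc w hw)

/-- An interior vertex of a path has two distinct neighbours, hence degree ≥ 2. -/
lemma mid_degree {K : SimpleGraph V} [DecidableRel K.Adj] {a c b : V} (q : K.Walk a c)
    (hq : q.IsPath) (hmem : b ∈ q.support) (hba : b ≠ a) (hbc : b ≠ c)
    (hb : K.degree b ≤ 1) : False := by
  set q₁ := q.takeUntil b hmem with hq₁
  set q₂ := q.dropUntil b hmem with hq₂
  have hspec : q₁.append q₂ = q := q.take_spec hmem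
  have hpq₁ : q₁.IsPath := hq.takeUntil hmem
  have hpq₂ : q₂.IsPath := hq.dropUntil hmem
  -- second vertex of q₂
  cases hq2c : q₂ with
  | nil => exact hbc rfl
  | @cons _ z _ h₂ w₂ =>
    -- last-but-one vertex of q₁ via reverse
    cases hq1c : q₁.reverse with
    | nil => exact hba rfl
    | @cons _ y _ h₁ w₁ =>
      have hy1 : y ∈ q₁.support := by
        have : y ∈ q₁.reverse.support := by
          rw [hq1c, SimpleGraph.Walk.support_cons]
          exact List.mem_cons_of_mem _ w₁.start_mem_support
        rwa [SimpleGraph.Walk.support_reverse, List.mem_reverse] at this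
      have hz2 : z ∈ q₂.support.tail := by
        rw [hq2c, SimpleGraph.Walk.support_cons]
        exact w₂.start_mem_support
      have hyz : y ≠ z := by
        have hnodup : (q₁.support ++ q₂.support.tail).Nodup := by
          rw [← SimpleGraph.Walk.support_append, hspec]
          exact hq.support_nodup
        intro hEq
        exact (List.disjoint_of_nodup_append hnodup) hy1 (hEq ▸ hz2)
      have h1b : K.Adj b y := by
        have : K.Adj b y := by
          have hrev : q₁.reverse.IsPath := hpq₁.reverse
          rw [hq1c] at hrev
          exact h₁
        exact this
      have h2b : K.Adj b z := h₂
      have : 1 < K.degree b := by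
        rw [SimpleGraph.degree]
        apply Finset.one_lt_card.mpr
        refine ⟨y, ?_, z, ?_, hyz⟩
        · rw [SimpleGraph.mem_neighborFinset]; exact h1b
        · rw [SimpleGraph.mem_neighborFinset]; exact h2b
      omega

lemma three_ends {K : SimpleGraph V} [DecidableRel K.Adj] (hdeg : ∀ z, K.degree z ≤ 2)
    {a b c : V} (hab : a ≠ b) (hac : a ≠ c) (hbc : b ≠ c) (ha : K.degree a ≤ 1)
    (hb : K.degree b ≤ 1) (hc : K.degree c ≤ 1) (hrb : K.Reachable a b)
    (hrc : K.Reachable a c) : False := by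
  obtain ⟨wb⟩ := hrb
  obtain ⟨wc⟩ := hrc
  set p := wb.toPath with hp
  set q := wc.toPath with hq
  have hcard : (K.neighborFinset a \ (∅ : Finset V)).card ≤ 1 := by
    rw [Finset.sdiff_empty]
    exact ha
  rcases nest_lemma hdeg (p : K.Walk a b) (q : K.Walk a c) ∅ p.isPath q.isPath
      (by simp) (by simp) hcard with hs | hs
  · exact mid_degree (q : K.Walk a c) q.isPath (hs b (SimpleGraph.Walk.end_mem_support _))
      (Ne.symm hab) hbc hb
  · exact mid_degree (p : K.Walk a b) p.isPath (hs c (SimpleGraph.Walk.end_mem_support _))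
      (Ne.symm hac) (Ne.symm hbc) hc

/-! ### Missing-color sets of fan vertices are pairwise disjoint -/

instance KG_decRel (T : Finset (Sym2 V)) (C : Sym2 V → ℕ) (α β : ℕ) :
    DecidableRel (KG T C α β).Adj := fun a b =>
  decidable_of_iff (a ≠ b ∧ s(a,b) ∈ T ∧ (C s(a,b) = α ∨ C s(a,b) = β)) Iff.rfl

lemma KG_deg_le_two {T : Finset (Sym2 V)} {k : ℕ} {C : Sym2 V → ℕ} (hC : EC T k C)
    (α β : ℕ) (z : V) : (KG T C α β).degree z ≤ 2 := by
  rw [SimpleGraph.degree]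
  have : ((KG T C α β).neighborFinset z).card ≤ ({α, β} : Finset ℕ).card := by
    apply Finset.card_le_card_of_injOn (fun u => C s(z,u))
    · intro u hu
      rw [Finset.mem_coe, SimpleGraph.mem_neighborFinset] at hu
      obtain ⟨_, _, hc⟩ := hu
      simp only [Finset.mem_coe, Finset.mem_insert, Finset.mem_singleton]
      exact hc
    · intro u₁ hu₁ u₂ hu₂ hcc
      simp only [Finset.mem_coe, SimpleGraph.mem_neighborFinset] at hu₁ hu₂
      by_contra hne
      have h₁ : s(z,u₁) ∈ T := hu₁.2.1
      have h₂ : s(z,u₂) ∈ T := hu₂.2.1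
      have hne' : s(z,u₁) ≠ s(z,u₂) := fun h => hne (sym2_mk_eq (Ne.symm hu₁.1) h)
      exact hC.2 _ h₁ _ h₂ hne' ⟨z, by simp, by simp⟩ hcc
  calc ((KG T C α β).neighborFinset z).card ≤ ({α, β} : Finset ℕ).card := this
    _ ≤ 2 := Finset.card_insert_le _ _ |>.trans (by simp)

lemma KG_deg_le_one_left {T : Finset (Sym2 V)} {k : ℕ} {C : Sym2 V → ℕ} (hC : EC T k C)
    {α : ℕ} (β : ℕ) {z : V} (hz : α ∉ pal T C z) : (KG T C α β).degree z ≤ 1 := by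
  rw [SimpleGraph.degree]
  have : ((KG T C α β).neighborFinset z).card ≤ ({β} : Finset ℕ).card := by
    apply Finset.card_le_card_of_injOn (fun u => C s(z,u))
    · intro u hu
      rw [Finset.mem_coe, SimpleGraph.mem_neighborFinset] at hu
      obtain ⟨_, hT, hc⟩ := hu
      rcases hc with hc | hc
      · exact absurd (hc ▸ mem_pal_of_mem hT (by simp : z ∈ s(z,u))) hz
      · simp [hc]
    · intro u₁ hu₁ u₂ hu₂ hcc
      simp only [Finset.mem_coe, SimpleGraph.mem_neighborFinset] at hu₁ hu₂
      by_contra hne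
      have hne' : s(z,u₁) ≠ s(z,u₂) := fun h => hne (sym2_mk_eq (Ne.symm hu₁.1) h)
      exact hC.2 _ hu₁.2.1 _ hu₂.2.1 hne' ⟨z, by simp, by simp⟩ hcc
  simpa using this

lemma KG_deg_le_one_right {T : Finset (Sym2 V)} {k : ℕ} {C : Sym2 V → ℕ} (hC : EC T k C)
    (α : ℕ) {β : ℕ} {z : V} (hz : β ∉ pal T C z) : (KG T C α β).degree z ≤ 1 := by
  rw [SimpleGraph.degree]
  have : ((KG T C α β).neighborFinset z).card ≤ ({α} : Finset ℕ).card := by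
    apply Finset.card_le_card_of_injOn (fun u => C s(z,u))
    · intro u hu
      rw [Finset.mem_coe, SimpleGraph.mem_neighborFinset] at hu
      obtain ⟨_, hT, hc⟩ := hu
      rcases hc with hc | hc
      · simp [hc]
      · exact absurd (hc ▸ mem_pal_of_mem hT (by simp : z ∈ s(z,u))) hz
    · intro u₁ hu₁ u₂ hu₂ hcc
      simp only [Finset.mem_coe, SimpleGraph.mem_neighborFinset] at hu₁ hu₂
      by_contra hne
      have hne' : s(z,u₁) ≠ s(z,u₂) := fun h => hne (sym2_mk_eq (Ne.symm hu₁.1) h)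
      exact hC.2 _ hu₁.2.1 _ hu₂.2.1 hne' ⟨z, by simp, by simp⟩ hcc
  simpa using this

lemma ds_erase_mem {S : Finset (Sym2 V)} {e₀ : Sym2 V} {z : V} (he₀ : e₀ ∈ S) (hz : z ∈ e₀) :
    ds (S.erase e₀) z = ds S z - 1 := by
  unfold ds
  rw [Finset.filter_erase, Finset.card_erase_of_mem (Finset.mem_filter.mpr ⟨he₀, hz⟩)]

lemma ds_erase_le {S : Finset (Sym2 V)} {e₀ : Sym2 V} (z : V) :
    ds (S.erase e₀) z ≤ ds S z :=
  Finset.card_le_card (Finset.filter_subset_filter _ (Finset.erase_subset _ _))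

lemma ds_pos {S : Finset (Sym2 V)} {e : Sym2 V} {z : V} (he : e ∈ S) (hz : z ∈ e) :
    0 < ds S z :=
  Finset.card_pos.mpr ⟨e, Finset.mem_filter.mpr ⟨he, hz⟩⟩

/-- Main Kempe-chain lemma: missing color sets of distinct fan vertices are disjoint. -/
lemma fan_disjoint {S : Finset (Sym2 V)} {k : ℕ} (hnd : ∀ e ∈ S, ¬e.IsDiag) {v w₀ : V}
    (hvw : s(v,w₀) ∈ S) {C : Sym2 V → ℕ} (hC : EC (S.erase s(v,w₀)) k C)
    (hnc : ¬ ECol S k) (hdsv : ds S v ≤ k) :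
    ∀ {x : V} {lx : List V} {y : V} {ly : List V} {α : ℕ},
      RCh (S.erase s(v,w₀)) k v w₀ C x lx → RCh (S.erase s(v,w₀)) k v w₀ C y ly →
      α ∈ mis (S.erase s(v,w₀)) k C x → α ∈ mis (S.erase s(v,w₀)) k C y → x ≠ y → False := by
  set T := S.erase s(v,w₀) with hT
  have hndT : ∀ e ∈ T, ¬e.IsDiag := fun e he => hnd e (Finset.erase_subset _ _ he)
  have hw₀v : w₀ ≠ v := by
    intro h
    exact hnd _ hvw (by rw [h]; exact Sym2.mk_isDiag_iff.mpr rfl)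
  have hvT : s(v,w₀) ∉ T := Finset.notMem_erase _ _
  have contra : ∀ (C' : Sym2 V → ℕ), EC T k C' → ∀ (u : V) (l : List V) (γ : ℕ),
      RCh T k v w₀ C' u l → γ ∈ mis T k C' u → γ ∈ mis T k C' v → False := by
    intro C' hC' u l γ hch hu hv'
    apply hnc
    rw [← Finset.insert_erase hvw]
    exact RCh.shift hndT hw₀v hvT l C' u γ hC' hch hu hv'
  intro x lx y ly α hx hy hmx hmy hxy
  -- a color missing at v
  have hdsTv : ds T v < k := by
    have h1 : ds T v = ds S v - 1 := ds_erase_mem hvw (by simp)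
    have h2 : 0 < ds S v := ds_pos hvw (by simp)
    omega
  have hmisv : (mis T k C v).Nonempty := by
    rw [← Finset.card_pos, mis_card hC]
    omega
  obtain ⟨β, hβ⟩ := hmisv
  have hαβ : α ≠ β := by
    rintro rfl
    exact contra C hC x lx α hx hmx hβ
  have hαk : α < k := mis_lt hmx
  have hβk : β < k := mis_lt hβ
  have hxv : x ≠ v := hx.ne_v hndT hw₀v x (List.mem_cons_self)
  have hyv : y ≠ v := hy.ne_v hndT hw₀v y (List.mem_cons_self)
  set K := KG T C α β with hK
  have hdeg2 : ∀ z, K.degree z ≤ 2 := KG_deg_le_two hC α β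
  have hdegv : K.degree v ≤ 1 := KG_deg_le_one_right hC α (not_mem_pal_of_mis hβ)
  have hdegx : K.degree x ≤ 1 := KG_deg_le_one_left hC β (not_mem_pal_of_mis hmx)
  have hdegy : K.degree y ≤ 1 := KG_deg_le_one_left hC β (not_mem_pal_of_mis hmy)
  -- main swap argument, applied to a fan vertex missing α that is not reachable from v
  have key : ∀ (x' : V) (lx' : List V), RCh T k v w₀ C x' lx' → α ∈ mis T k C x' →
      ¬ K.Reachable v x' → False := by
    intro x' lx' hx' hmx' hnr
    have hNotRv : ¬ K.Reachable x' v := fun h => hnr h.symm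
    set C' := KC T C α β x' with hC'def
    have hEC' : EC T k C' := EC_KC hC hαk hβk
    have hmisv' : β ∈ mis T k C' v := by
      rw [hC'def, mis_KC_unreached hNotRv]
      exact hβ
    have transfer : ∀ (u : V) (l : List V), RCh T k v w₀ C u l →
        (∃ l', RCh T k v w₀ C' u l') ∨
        (∃ u' l' γ, RCh T k v w₀ C' u' l' ∧ γ ∈ mis T k C' u' ∧ γ ∈ mis T k C' v) := by
      intro u l h
      induction h with
      | base => exact Or.inl ⟨[], RCh.base⟩
      | @cons x₁ l₁ u₁ hsub hedge hmis hnodup ih =>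
        rcases ih with ⟨l', hch'⟩ | hdone
        · have hce : C' s(v,u₁) = C s(v,u₁) :=
            KC_eq_at_unreached hNotRv (by simp : v ∈ s(v,u₁))
          by_cases hreach : K.Reachable x' x₁
          · by_cases hγ : C s(v,u₁) = α
            · right
              refine ⟨x₁, l', β, hch', ?_, hmisv'⟩
              exact mis_KC_reached_beta hreach hαβ (hγ ▸ hmis) hβk
            · have hγβ : C s(v,u₁) ≠ β := mis_ne_of_colored hβ hedge (by simp)
              have hm' : C s(v,u₁) ∈ mis T k C' x₁ :=
                (mis_KC_reached_other hreach hγ hγβ).mpr hmis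
              by_cases hu : u₁ ∈ x₁ :: l'
              · exact Or.inl (hch'.trunc u₁ hu)
              · exact Or.inl ⟨x₁ :: l', RCh.cons hch' hedge (hce ▸ hm') hu⟩
          · have hm' : C s(v,u₁) ∈ mis T k C' x₁ := by
              rw [hC'def, mis_KC_unreached hreach]
              exact hmis
            by_cases hu : u₁ ∈ x₁ :: l'
            · exact Or.inl (hch'.trunc u₁ hu)
            · exact Or.inl ⟨x₁ :: l', RCh.cons hch' hedge (hce ▸ hm') hu⟩
        · exact Or.inr hdone
    rcases transfer x' lx' hx' with ⟨l', hch'⟩ | ⟨u', l', γ, hch', hm1, hm2⟩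
    · have hmx'' : β ∈ mis T k C' x' :=
        mis_KC_reached_beta (SimpleGraph.Reachable.refl x') hαβ hmx' hβk
      exact contra C' hEC' x' l' β hch' hmx'' hmisv'
    · exact contra C' hEC' u' l' γ hch' hm1 hm2
  by_cases hvx : K.Reachable v x
  · by_cases hvy : K.Reachable v y
    · exact three_ends hdeg2 (Ne.symm hxv) (Ne.symm hyv) hxy hdegv hdegx hdegy hvx hvy
    · exact key y ly hy hmy hvy
  · exact key x lx hx hmx hvx

/-! ### The fan-counting (Vizing Adjacency Lemma) -/

def Ns (S : Finset (Sym2 V)) (v : V) : Finset V :=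
  Finset.univ.filter (fun u => s(v,u) ∈ S)

lemma mem_Ns {S : Finset (Sym2 V)} {v u : V} : u ∈ Ns S v ↔ s(v,u) ∈ S := by
  simp [Ns]

lemma ds_erase_not_mem {S : Finset (Sym2 V)} {e₀ : Sym2 V} {z : V} (hz : z ∉ e₀) :
    ds (S.erase e₀) z = ds S z := by
  unfold ds
  rw [Finset.filter_erase, Finset.erase_eq_of_notMem]
  intro h
  exact hz (Finset.mem_filter.mp h).2

/-- Vizing Adjacency Lemma, for a minimal-style situation : if `S` is not `k`-colorable
but `S` minus the edge `vw₀` is, then `v` has at least `k + 1 - ds S w₀` neighbours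
(other than `w₀`) of `S`-degree `k`. -/
lemma val_count {S : Finset (Sym2 V)} {k : ℕ} (hnd : ∀ e ∈ S, ¬e.IsDiag) {v w₀ : V}
    (hvw : s(v,w₀) ∈ S) (hcol : ECol (S.erase s(v,w₀)) k) (hnc : ¬ ECol S k)
    (hds : ∀ z, ds S z ≤ k) :
    k + 1 ≤ ds S w₀ + (((Ns S v).erase w₀).filter (fun u => ds S u = k)).card := by
  classical
  obtain ⟨C, hC⟩ := hcol
  set T := S.erase s(v,w₀) with hTdef
  have hndT : ∀ e ∈ T, ¬e.IsDiag := fun e he => hnd e (Finset.erase_subset _ _ he)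
  have hw₀v : w₀ ≠ v := by
    intro h
    exact hnd _ hvw (by rw [h]; exact Sym2.mk_isDiag_iff.mpr rfl)
  have hvT : s(v,w₀) ∉ T := Finset.notMem_erase _ _
  have contra : ∀ (u : V) (l : List V) (γ : ℕ),
      RCh T k v w₀ C u l → γ ∈ mis T k C u → γ ∈ mis T k C v → False := by
    intro u l γ hch hu hv'
    apply hnc
    rw [← Finset.insert_erase hvw]
    exact RCh.shift hndT hw₀v hvT l C u γ hC hch hu hv'
  set FSf : Finset V := Finset.univ.filter (fun u => ∃ l, RCh T k v w₀ C u l) with hFSdef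
  have hmemFS : ∀ u : V, u ∈ FSf ↔ ∃ l, RCh T k v w₀ C u l := by
    intro u; simp [hFSdef]
  have hw₀FS : w₀ ∈ FSf := (hmemFS w₀).mpr ⟨[], RCh.base⟩
  have hFSNs : FSf ⊆ Ns S v := by
    intro u hu
    obtain ⟨l, hch⟩ := (hmemFS u).mp hu
    rcases hch.mem_T u (List.mem_cons_self) with rfl | hmem
    · exact mem_Ns.mpr hvw
    · exact mem_Ns.mpr (Finset.erase_subset _ _ hmem)
  have hneV : ∀ u ∈ FSf, u ≠ v := by
    intro u hu
    obtain ⟨l, hch⟩ := (hmemFS u).mp hu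
    exact hch.ne_v hndT hw₀v u (List.mem_cons_self)
  -- disjointness
  have hdisj : ∀ x ∈ FSf, ∀ y ∈ FSf, x ≠ y →
      Disjoint (mis T k C x) (mis T k C y) := by
    intro x hx y hy hxy
    rw [Finset.disjoint_left]
    intro γ hγx hγy
    obtain ⟨lx, hchx⟩ := (hmemFS x).mp hx
    obtain ⟨ly, hchy⟩ := (hmemFS y).mp hy
    exact fan_disjoint hnd hvw hC hnc (hds v) hchx hchy hγx hγy hxy
  set U : Finset ℕ := FSf.biUnion (fun x => mis T k C x) with hUdef
  have hUcard : U.card = FSf.sum (fun x => (mis T k C x).card) :=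
    Finset.card_biUnion hdisj
  -- the injection from U into FSf.erase w₀
  have hUinj : U.card ≤ (FSf.erase w₀).card := by
    have hex : ∀ γ ∈ U, ∃ u : V, s(v,u) ∈ T ∧ C s(v,u) = γ := by
      intro γ hγ
      obtain ⟨x, hx, hγx⟩ := Finset.mem_biUnion.mp hγ
      have hγv : γ ∉ mis T k C v := by
        intro hγv
        obtain ⟨lx, hchx⟩ := (hmemFS x).mp hx
        exact contra x lx γ hchx hγx hγv
      have hγpal : γ ∈ pal T C v := by
        by_contra hp
        exact hγv (mem_mis (mis_lt hγx) hp)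
      obtain ⟨e, he, hce⟩ := Finset.mem_image.mp hγpal
      rw [Finset.mem_filter] at he
      obtain ⟨u, hu, rfl⟩ := mem_decomp hndT he.1 he.2
      exact ⟨u, he.1, hce⟩
    set g : ℕ → V := fun γ =>
      if h : ∃ u : V, s(v,u) ∈ T ∧ C s(v,u) = γ then h.choose else v with hgdef
    apply Finset.card_le_card_of_injOn g
    · intro γ hγ
      obtain ⟨u₀, hu₀⟩ := hex γ hγ
      have hEx : ∃ u : V, s(v,u) ∈ T ∧ C s(v,u) = γ := ⟨u₀, hu₀⟩
      have hgs : s(v, g γ) ∈ T ∧ C s(v, g γ) = γ := by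
        rw [hgdef]
        simp only []
        rw [dif_pos hEx]
        exact hEx.choose_spec
      -- g γ is in the fan by maximality (closure)
      obtain ⟨x, hx, hγx⟩ := Finset.mem_biUnion.mp hγ
      obtain ⟨lx, hchx⟩ := (hmemFS x).mp hx
      have hgFS : g γ ∈ FSf := by
        rw [hmemFS]
        by_cases hmem : g γ ∈ x :: lx
        · exact hchx.trunc _ hmem
        · exact ⟨x :: lx, RCh.cons hchx hgs.1 (by rw [hgs.2]; exact hγx) hmem⟩
      refine Finset.mem_erase.mpr ⟨?_, hgFS⟩
      intro h
      rw [h] at hgs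
      exact hvT hgs.1
    · intro γ₁ hγ₁ γ₂ hγ₂ hgg
      obtain ⟨u₁, hu₁⟩ := hex γ₁ (by exact hγ₁)
      obtain ⟨u₂, hu₂⟩ := hex γ₂ (by exact hγ₂)
      have hEx₁ : ∃ u : V, s(v,u) ∈ T ∧ C s(v,u) = γ₁ := ⟨u₁, hu₁⟩
      have h1 : C s(v, g γ₁) = γ₁ := by
        rw [hgdef]; simp only []; rw [dif_pos hEx₁]
        exact hEx₁.choose_spec.2
      have hEx₂ : ∃ u : V, s(v,u) ∈ T ∧ C s(v,u) = γ₂ := ⟨u₂, hu₂⟩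
      have h2 : C s(v, g γ₂) = γ₂ := by
        rw [hgdef]; simp only []; rw [dif_pos hEx₂]
        exact hEx₂.choose_spec.2
      rw [← h1, ← h2, hgg]
  -- compute the sum
  have hw₀S : 0 < ds S w₀ := ds_pos hvw (by simp)
  have hfw₀ : (mis T k C w₀).card = k + 1 - ds S w₀ := by
    rw [mis_card hC, hTdef, ds_erase_mem hvw (by simp)]
    have := hds w₀
    omega
  have herase_eq : ∀ x ∈ FSf.erase w₀, (mis T k C x).card = k - ds S x := by
    intro x hx
    rw [mis_card hC, hTdef, ds_erase_not_mem]
    intro hmem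
    rcases Sym2.mem_iff.mp hmem with h | h
    · exact hneV x (Finset.mem_of_mem_erase hx) h
    · exact (Finset.mem_erase.mp hx).1 h
  set Pd := (FSf.erase w₀).filter (fun u => ds S u = k) with hPd
  set Pl := (FSf.erase w₀).filter (fun u => ¬ ds S u = k) with hPl
  have hsplitcard : Pd.card + Pl.card = (FSf.erase w₀).card :=
    Finset.card_filter_add_card_filter_not _
  have hsum_lower : Pl.card ≤ (FSf.erase w₀).sum (fun x => (mis T k C x).card) := by
    calc Pl.card = Pl.sum (fun _ => 1) := by simp
      _ ≤ Pl.sum (fun x => (mis T k C x).card) := by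
          apply Finset.sum_le_sum
          intro x hx
          rw [herase_eq x (Finset.mem_filter.mp hx).1]
          have h1 := hds x
          have h2 := (Finset.mem_filter.mp hx).2
          omega
      _ ≤ (FSf.erase w₀).sum (fun x => (mis T k C x).card) :=
          Finset.sum_le_sum_of_subset (Finset.filter_subset _ _)
  have hsum_split : FSf.sum (fun x => (mis T k C x).card) =
      (mis T k C w₀).card + (FSf.erase w₀).sum (fun x => (mis T k C x).card) :=
    (Finset.add_sum_erase _ _ hw₀FS).symm
  have hchain : k + 1 - ds S w₀ + Pl.card ≤ Pd.card + Pl.card := by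
    calc k + 1 - ds S w₀ + Pl.card
        ≤ (mis T k C w₀).card + (FSf.erase w₀).sum (fun x => (mis T k C x).card) := by
          rw [hfw₀]; omega
      _ = U.card := by rw [hUcard, hsum_split]
      _ ≤ (FSf.erase w₀).card := hUinj
      _ = Pd.card + Pl.card := hsplitcard.symm
  have hPdle : Pd.card ≤ (((Ns S v).erase w₀).filter (fun u => ds S u = k)).card := by
    apply Finset.card_le_card
    apply Finset.filter_subset_filter
    intro u hu
    rw [Finset.mem_erase] at hu ⊢
    exact ⟨hu.1, hFSNs hu.2⟩
  have := hds w₀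
  omega

/-! ### Structural facts for HZ graphs -/

lemma sym2_cases (e : Sym2 V) : ∃ a b : V, e = s(a,b) :=
  Sym2.ind (fun a b => ⟨a, b, rfl⟩) e

lemma ds_le_degree {G : SimpleGraph V} [DecidableRel G.Adj] {S : Finset (Sym2 V)}
    (hSE : S ⊆ G.edgeFinset) (z : V) : ds S z ≤ G.degree z := by
  rw [← SimpleGraph.card_incidenceFinset_eq_degree, SimpleGraph.incidenceFinset_eq_filter]
  exact Finset.card_le_card (Finset.filter_subset_filter _ hSE)

lemma degree_eq_filter {G : SimpleGraph V} [DecidableRel G.Adj] (z : V) :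
    (G.edgeFinset.filter (fun e => z ∈ e)).card = G.degree z := by
  rw [← SimpleGraph.card_incidenceFinset_eq_degree, SimpleGraph.incidenceFinset_eq_filter]

lemma hz_structure {G : SimpleGraph V} [DecidableRel G.Adj] {k : ℕ} (hk1 : 1 ≤ k)
    (hmax : ∀ z, G.degree z ≤ k) (hconn : G.Connected)
    (hnc : ¬ ECol G.edgeFinset k)
    (hcore : ∀ v, G.degree v = k →
      ((G.neighborFinset v).filter (fun w => G.degree w = k)).card ≤ 2) :
    (∀ z, k - 1 ≤ G.degree z) ∧
    (∀ z, 2 ≤ ((G.neighborFinset z).filter (fun w => G.degree w = k)).card) := by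
  classical
  -- minimal non-colorable sub-edge-set
  obtain ⟨S, hS𝒮, hminS⟩ := Finset.exists_min_image
    (G.edgeFinset.powerset.filter (fun s => ¬ ECol s k)) Finset.card
    ⟨G.edgeFinset, Finset.mem_filter.mpr ⟨Finset.mem_powerset_self _, hnc⟩⟩
  rw [Finset.mem_filter, Finset.mem_powerset] at hS𝒮
  obtain ⟨hSE, hncS⟩ := hS𝒮
  have hmin : ∀ e ∈ S, ECol (S.erase e) k := by
    intro e he
    by_contra hcc
    have hmem : S.erase e ∈ (G.edgeFinset.powerset.filter (fun s => ¬ ECol s k)) :=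
      Finset.mem_filter.mpr ⟨Finset.mem_powerset.mpr ((Finset.erase_subset _ _).trans hSE), hcc⟩
    have := hminS _ hmem
    have hlt : (S.erase e).card < S.card := Finset.card_erase_lt_of_mem he
    omega
  have hnd : ∀ e ∈ S, ¬ e.IsDiag := fun e he =>
    SimpleGraph.not_isDiag_of_mem_edgeSet G (SimpleGraph.mem_edgeFinset.mp (hSE he))
  have hds : ∀ z, ds S z ≤ k := fun z => (ds_le_degree hSE z).trans (hmax z)
  have hadj : ∀ {a b : V}, s(a,b) ∈ S → G.Adj a b := by
    intro a b h
    exact (G.mem_edgeSet).mp (SimpleGraph.mem_edgeFinset.mp (hSE h))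
  have hswap : ∀ {a b : V}, s(a,b) ∈ S → s(b,a) ∈ S := by
    intro a b h
    rwa [Sym2.eq_swap]
  have hval : ∀ v w₀, s(v,w₀) ∈ S →
      k + 1 ≤ ds S w₀ + (((Ns S v).erase w₀).filter (fun u => ds S u = k)).card :=
    fun v w₀ h => val_count hnd h (hmin _ h) hncS hds
  have hdsk_deg : ∀ {u : V}, ds S u = k → G.degree u = k := by
    intro u h
    have h1 := ds_le_degree hSE u
    have h2 := hmax u
    omega
  -- every S-touched vertex has an S-neighbour of S-degree k
  have hexnbr : ∀ z w, s(z,w) ∈ S → ∃ u, s(z,u) ∈ S ∧ ds S u = k := by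
    intro z w hzw
    have h1 := hval z w hzw
    have h2 := hds w
    have hpos : 0 < (((Ns S z).erase w).filter (fun u => ds S u = k)).card := by omega
    obtain ⟨u, hu⟩ := Finset.card_pos.mp hpos
    rw [Finset.mem_filter, Finset.mem_erase, mem_Ns] at hu
    exact ⟨u, hu.1.2, hu.2⟩
  -- the filtered set at a k-vertex u₀ injects into the (≤ 2) core neighbours
  have hfilter2 : ∀ (u₀ z : V), ds S u₀ = k →
      (((Ns S u₀).erase z).filter (fun u => ds S u = k)).card ≤ 2 := by
    intro u₀ z h
    refine le_trans (Finset.card_le_card ?_) (hcore u₀ (hdsk_deg h))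
    intro x hx
    rw [Finset.mem_filter, Finset.mem_erase, mem_Ns] at hx
    rw [Finset.mem_filter, SimpleGraph.mem_neighborFinset]
    exact ⟨hadj hx.1.2, hdsk_deg hx.2⟩
  have hds_ge : ∀ z, 0 < ds S z → k - 1 ≤ ds S z := by
    intro z hz
    obtain ⟨e, he⟩ := Finset.card_pos.mp hz
    rw [Finset.mem_filter] at he
    obtain ⟨w, hw, hew⟩ := mem_decomp hnd he.1 he.2
    obtain ⟨u₀, hu₀S, hu₀k⟩ := hexnbr z w (hew ▸ he.1)
    have h1 := hval u₀ z (hswap hu₀S)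
    have h2 := hfilter2 u₀ z hu₀k
    omega
  have htwo : ∀ z, 0 < ds S z → ∃ u₀ u₁, u₀ ≠ u₁ ∧ s(z,u₀) ∈ S ∧ s(z,u₁) ∈ S ∧
      ds S u₀ = k ∧ ds S u₁ = k := by
    intro z hz
    obtain ⟨e, he⟩ := Finset.card_pos.mp hz
    rw [Finset.mem_filter] at he
    obtain ⟨w, hw, hew⟩ := mem_decomp hnd he.1 he.2
    obtain ⟨u₀, hu₀S, hu₀k⟩ := hexnbr z w (hew ▸ he.1)
    have h1 := hval z u₀ hu₀S
    have hpos : 0 < (((Ns S z).erase u₀).filter (fun u => ds S u = k)).card := by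
      have := hu₀k; omega
    obtain ⟨u₁, hu₁⟩ := Finset.card_pos.mp hpos
    rw [Finset.mem_filter, Finset.mem_erase, mem_Ns] at hu₁
    exact ⟨u₀, u₁, fun h => hu₁.1.1 h.symm, hu₀S, hu₁.1.2, hu₀k, hu₁.2⟩
  have hds_eq : ∀ z, 0 < ds S z → ds S z = G.degree z := by
    intro z hz
    by_contra hne
    have h1 := ds_le_degree hSE z
    have h2 := hmax z
    have h3 := hds_ge z hz
    have hdsz : ds S z = k - 1 := by omega
    have hdegz : G.degree z = k := by omega
    obtain ⟨u₀, u₁, hne01, hS0, hS1, hk0, hk1'⟩ := htwo z hz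
    have hu₀pos : 0 < ds S u₀ := by omega
    obtain ⟨w₀, w₁, hnew, hSw0, hSw1, hkw0, hkw1⟩ := htwo u₀ hu₀pos
    have hw₀z : w₀ ≠ z := by intro h; rw [h, hdsz] at hkw0; omega
    have hw₁z : w₁ ≠ z := by intro h; rw [h, hdsz] at hkw1; omega
    have hsub : ({z, w₀, w₁} : Finset V) ⊆
        (G.neighborFinset u₀).filter (fun w => G.degree w = k) := by
      intro x hx
      rw [Finset.mem_filter, SimpleGraph.mem_neighborFinset]
      rcases Finset.mem_insert.mp hx with rfl | hx
      · exact ⟨(hadj hS0).symm, hdegz⟩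
      · rcases Finset.mem_insert.mp hx with rfl | hx
        · exact ⟨hadj hSw0, hdsk_deg hkw0⟩
        · rw [Finset.mem_singleton] at hx
          subst hx
          exact ⟨hadj hSw1, hdsk_deg hkw1⟩
    have hcard3 : ({z, w₀, w₁} : Finset V).card = 3 := by
      rw [Finset.card_insert_of_notMem (by simp [Ne.symm hw₀z, Ne.symm hw₁z]),
        Finset.card_insert_of_notMem (by simp [hnew]), Finset.card_singleton]
    have := Finset.card_le_card hsub
    have := hcore u₀ (hdsk_deg hk0)
    omega
  -- all vertices are S-touched
  have hSne : S.Nonempty := by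
    rcases S.eq_empty_or_nonempty with rfl | h
    · exact absurd (ecol_empty k) hncS
    · exact h
  obtain ⟨e₀, he₀⟩ := hSne
  obtain ⟨a, b, rfl⟩ := sym2_cases e₀
  have hclosure : ∀ z u, 0 < ds S z → G.Adj z u → 0 < ds S u := by
    intro z u hz hzu
    have hset : S.filter (fun e => z ∈ e) = G.edgeFinset.filter (fun e => z ∈ e) := by
      apply Finset.eq_of_subset_of_card_le (Finset.filter_subset_filter _ hSE)
      rw [degree_eq_filter, ← hds_eq z hz]
      exact le_of_eq rfl
    have hmem : s(z,u) ∈ S.filter (fun e => z ∈ e) := by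
      rw [hset, Finset.mem_filter, SimpleGraph.mem_edgeFinset]
      exact ⟨(G.mem_edgeSet).mpr hzu, by simp⟩
    exact ds_pos (Finset.mem_filter.mp hmem).1 (by simp : u ∈ s(z,u))
  have hwalk : ∀ (p q : V) (w : G.Walk p q), 0 < ds S p → 0 < ds S q := by
    intro p q w
    induction w with
    | nil => exact id
    | cons h w ih => exact fun hp => ih (hclosure _ _ hp h)
  have hall : ∀ z, 0 < ds S z := by
    intro z
    obtain ⟨w⟩ := hconn.preconnected a z
    exact hwalk a z w (ds_pos he₀ (by simp))
  constructor
  · intro z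
    rw [← hds_eq z (hall z)]
    exact hds_ge z (hall z)
  · intro z
    obtain ⟨u₀, u₁, hne01, hS0, hS1, hk0, hk1'⟩ := htwo z (hall z)
    apply Finset.one_lt_card.mpr
    refine ⟨u₀, ?_, u₁, ?_, hne01⟩
    · rw [Finset.mem_filter, SimpleGraph.mem_neighborFinset]
      exact ⟨hadj hS0, hdsk_deg hk0⟩
    · rw [Finset.mem_filter, SimpleGraph.mem_neighborFinset]
      exact ⟨hadj hS1, hdsk_deg hk1'⟩

/-! ### The endgame: Corollary 2.6 -/

lemma endgame {G : SimpleGraph V} [DecidableRel G.Adj] {Δ : ℕ}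
    (A D : V → Finset V)
    (hAdef : ∀ u, A u = (G.neighborFinset u).filter (fun w => G.degree w = Δ - 1))
    (hDdef : ∀ u, D u = (G.neighborFinset u).filter (fun w => G.degree w = Δ))
    (hΔ : 7 ≤ Δ)
    (hdich : ∀ z, G.degree z = Δ ∨ G.degree z = Δ - 1)
    (htwo : ∀ z, 2 ≤ (D z).card)
    (hcore : ∀ v : V, G.degree v = Δ → (D v).card ≤ 2)
    (hconn : G.Connected)
    (h1 : ∀ x y : V, G.Adj x y → G.degree x = Δ - 1 → G.degree y = Δ - 1 → D x = D y)
    (h2 : ∀ u v : V, G.Adj u v → G.degree u = Δ → G.degree v = Δ → A u = A v)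
    (h3 : ∀ u v : V, G.degree u = Δ → G.degree v = Δ → A u ≠ A v →
      (A u ∩ A v).Nonempty → (A u ∩ A v).card = Δ - 3)
    (hex : ∃ u v : V, G.degree u = Δ ∧ G.degree v = Δ ∧ A u ≠ A v)
    {x y : V} (hx : G.degree x = Δ - 1) (hy : G.degree y = Δ - 1) (hadjxy : G.Adj x y) :
    False := by
  have hΔne : Δ - 1 ≠ Δ := by omega
  have memA : ∀ {u w : V}, w ∈ A u ↔ G.Adj u w ∧ G.degree w = Δ - 1 := by
    intro u w
    rw [hAdef, Finset.mem_filter, SimpleGraph.mem_neighborFinset]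
  have memDN : ∀ {u w : V}, w ∈ D u ↔ G.Adj u w ∧ G.degree w = Δ := by
    intro u w
    rw [hDdef, Finset.mem_filter, SimpleGraph.mem_neighborFinset]
  -- the A-set of a Δ-vertex has exactly Δ - 2 elements
  have hAcard : ∀ u : V, G.degree u = Δ → (A u).card = Δ - 2 := by
    intro u hu
    have hsplit : ((G.neighborFinset u).filter (fun w => G.degree w = Δ)).card
        + ((G.neighborFinset u).filter (fun w => ¬ G.degree w = Δ)).card
        = (G.neighborFinset u).card :=
      Finset.card_filter_add_card_filter_not _
    have hfeq : (G.neighborFinset u).filter (fun w => ¬ G.degree w = Δ) = A u := by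
      rw [hAdef]
      apply Finset.filter_congr
      intro w _
      rcases hdich w with h | h
      · simp only [h]
        exact iff_of_false (by simp) (by omega)
      · simp only [h]
        exact iff_of_true (by omega) (by simp)
    have hDNcard : (D u).card = 2 := le_antisymm (hcore u hu) (htwo u)
    rw [hDdef] at hDNcard
    rw [hfeq, hDNcard] at hsplit
    rw [SimpleGraph.card_neighborFinset_eq_degree, hu] at hsplit
    omega
  -- a Δ-neighbour of x
  have hpex : 0 < (D x).card := by have := htwo x; omega
  obtain ⟨p, hp⟩ := Finset.card_pos.mp hpex
  rw [memDN] at hp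
  obtain ⟨hadjxp, hdegp⟩ := hp
  -- x and y have the same Δ-neighbourhoods
  have hDNxy : D x = D y := h1 x y hadjxy hx hy
  have hxAp : x ∈ A p := memA.mpr ⟨hadjxp.symm, hx⟩
  have hyAp : y ∈ A p := by
    have hpy : p ∈ D y := hDNxy ▸ (memDN.mpr ⟨hadjxp, hdegp⟩)
    exact memA.mpr ⟨(memDN.mp hpy).1.symm, hy⟩
  -- pick a Δ-vertex whose A-set differs from A p
  obtain ⟨u₀, v₀, hu₀, hv₀, huv⟩ := hex
  obtain ⟨t, hdegt, hAt⟩ : ∃ t, G.degree t = Δ ∧ A t ≠ A p := by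
    by_cases h : A u₀ = A p
    · refine ⟨v₀, hv₀, fun hq => huv ?_⟩
      rw [h, hq]
    · exact ⟨u₀, hu₀, h⟩
  -- propagate along a walk from p to t
  set P : V → Prop := fun z =>
    (G.degree z = Δ ∧ A z = A p) ∨
    (G.degree z = Δ - 1 ∧ ∀ u' ∈ D z, A u' = A p) ∨
    (∃ q r : V, G.degree q = Δ ∧ G.degree r = Δ ∧ A q = A p ∧
      A r ≠ A q ∧ (A q ∩ A r).Nonempty) with hPdef
  have hstep : ∀ c c' : V, G.Adj c c' → P c → P c' := by
    intro c c' hadj hPc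
    rcases hPc with ⟨hdc, hAc⟩ | ⟨hdc, hAc⟩ | hgoal
    · rcases hdich c' with hdc' | hdc'
      · refine Or.inl ⟨hdc', ?_⟩
        rw [← hAc]
        exact (h2 c c' hadj hdc hdc').symm
      · by_cases hall : ∀ u' ∈ D c', A u' = A p
        · exact Or.inr (Or.inl ⟨hdc', hall⟩)
        · push_neg at hall
          obtain ⟨u', hu'DN, hu'ne⟩ := hall
          refine Or.inr (Or.inr ⟨c, u', hdc, (memDN.mp hu'DN).2, hAc, ?_, ?_⟩)
          · rw [hAc]; exact hu'ne
          · exact ⟨c', Finset.mem_inter.mpr ⟨memA.mpr ⟨hadj, hdc'⟩,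
              memA.mpr ⟨(memDN.mp hu'DN).1.symm, hdc'⟩⟩⟩
    · rcases hdich c' with hdc' | hdc'
      · have : c' ∈ D c := memDN.mpr ⟨hadj, hdc'⟩
        exact Or.inl ⟨hdc', hAc c' this⟩
      · have hDNeq : D c' = D c := h1 c' c hadj.symm hdc' hdc
        refine Or.inr (Or.inl ⟨hdc', fun u' hu' => hAc u' (hDNeq ▸ hu')⟩)
    · exact Or.inr (Or.inr hgoal)
  have hwalk : ∀ (c d : V) (w : G.Walk c d), P c → P d := by
    intro c d w
    induction w with
    | nil => exact id
    | cons h w ih => exact fun hc => ih (hstep _ _ h hc)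
  have hPt : P t := by
    obtain ⟨w⟩ := hconn.preconnected p t
    exact hwalk p t w (Or.inl ⟨hdegp, rfl⟩)
  have hgoal : ∃ q r : V, G.degree q = Δ ∧ G.degree r = Δ ∧ A q = A p ∧
      A r ≠ A q ∧ (A q ∩ A r).Nonempty := by
    rcases hPt with ⟨_, hAt'⟩ | ⟨hdt', _⟩ | hgoal
    · exact absurd hAt' hAt
    · omega
    · exact hgoal
  obtain ⟨q, r, hdq, hdr, hAq, hArq, hqr⟩ := hgoal
  have hcardAq : (A q).card = Δ - 2 := hAcard q hdq
  have hinter : (A q ∩ A r).card = Δ - 3 :=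
    h3 q r hdq hdr (fun h => hArq h.symm) hqr
  have hdiff1 : (A q \ A r).card = 1 := by
    have := Finset.card_inter_add_card_sdiff (A q) (A r)
    omega
  have hxq : x ∈ A q := hAq ▸ hxAp
  have hyq : y ∈ A q := hAq ▸ hyAp
  have hxyne : x ≠ y := G.ne_of_adj hadjxy
  have hxyA : ∀ r'' : V, G.degree r'' = Δ → (x ∈ A r'' ↔ y ∈ A r'') := by
    intro r'' hdr''
    constructor
    · intro hxr
      have : r'' ∈ D y := hDNxy ▸ (memDN.mpr ⟨(memA.mp hxr).1.symm, hdr''⟩)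
      exact memA.mpr ⟨(memDN.mp this).1.symm, hy⟩
    · intro hyr
      have : r'' ∈ D x := hDNxy.symm ▸ (memDN.mpr ⟨(memA.mp hyr).1.symm, hdr''⟩)
      exact memA.mpr ⟨(memDN.mp this).1.symm, hx⟩
  have htwo_in_diff : ∀ r'' : V, G.degree r'' = Δ → x ∉ A r'' →
      2 ≤ (A q \ A r'').card := by
    intro r'' hdr'' hxr
    have hyr : y ∉ A r'' := fun h => hxr ((hxyA r'' hdr'').mpr h)
    have hsub : ({x, y} : Finset V) ⊆ A q \ A r'' := by
      intro z hz
      rcases Finset.mem_insert.mp hz with rfl | hz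
      · exact Finset.mem_sdiff.mpr ⟨hxq, hxr⟩
      · rw [Finset.mem_singleton] at hz
        subst hz
        exact Finset.mem_sdiff.mpr ⟨hyq, hyr⟩
    have hc2 : ({x, y} : Finset V).card = 2 := Finset.card_pair hxyne
    have := Finset.card_le_card hsub
    omega
  by_cases hxr : x ∈ A r
  case neg =>
    have := htwo_in_diff r hdr hxr
    omega
  case pos =>
  -- the swapped vertex a
  obtain ⟨a, ha⟩ := Finset.card_eq_one.mp hdiff1
  have haq : a ∈ A q := (Finset.mem_sdiff.mp (ha ▸ Finset.mem_singleton_self a)).1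
  have har : a ∉ A r := (Finset.mem_sdiff.mp (ha ▸ Finset.mem_singleton_self a)).2
  have hdega : G.degree a = Δ - 1 := (memA.mp haq).2
  -- all neighbours of a are Δ-vertices
  have hano : ∀ z, G.Adj a z → G.degree z = Δ := by
    intro z hazadj
    rcases hdich z with h | h
    · exact h
    · exfalso
      have hDNza : D a = D z := h1 a z hazadj hdega h
      have hqDNa : q ∈ D a := memDN.mpr ⟨(memA.mp haq).1.symm, hdq⟩
      have hzAq : z ∈ A q := by
        have : q ∈ D z := hDNza ▸ hqDNa
        exact memA.mpr ⟨(memDN.mp this).1.symm, h⟩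
      have hzAr : z ∉ A r := by
        intro hzr
        have h5 : r ∈ D z := memDN.mpr ⟨(memA.mp hzr).1.symm, hdr⟩
        have h6 : r ∈ D a := hDNza.symm ▸ h5
        exact har (memA.mpr ⟨(memDN.mp h6).1.symm, hdega⟩)
      have : z ∈ (A q \ A r) := Finset.mem_sdiff.mpr ⟨hzAq, hzAr⟩
      rw [ha, Finset.mem_singleton] at this
      subst this
      exact (G.ne_of_adj hazadj) rfl
  have hDNacard : (D a).card = Δ - 1 := by
    have hfull : D a = G.neighborFinset a := by
      rw [hDdef]
      apply Finset.filter_true_of_mem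
      intro z hz
      exact hano z ((SimpleGraph.mem_neighborFinset _ _ _).mp hz)
    rw [hfull, SimpleGraph.card_neighborFinset_eq_degree, hdega]
  have hDNxcard : (D x).card ≤ Δ - 2 := by
    have hsub : D x ⊆ (G.neighborFinset x).erase y := by
      intro z hz
      rw [memDN] at hz
      refine Finset.mem_erase.mpr ⟨?_, (SimpleGraph.mem_neighborFinset _ _ _).mpr hz.1⟩
      intro hzy
      subst hzy
      rw [hz.2] at hy
      omega
    calc (D x).card ≤ ((G.neighborFinset x).erase y).card := Finset.card_le_card hsub
      _ = (G.neighborFinset x).card - 1 :=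
          Finset.card_erase_of_mem ((SimpleGraph.mem_neighborFinset _ _ _).mpr hadjxy)
      _ ≤ Δ - 2 := by rw [SimpleGraph.card_neighborFinset_eq_degree, hx]; omega
  -- r' : a Δ-neighbour of a that is not a Δ-neighbour of x
  obtain ⟨r', hr'a, hr'x⟩ : ∃ r', r' ∈ D a ∧ r' ∉ D x := by
    by_contra hcc
    push_neg at hcc
    have := Finset.card_le_card hcc
    omega
  have hdr' : G.degree r' = Δ := (memDN.mp hr'a).2
  have haAr' : a ∈ A r' := memA.mpr ⟨(memDN.mp hr'a).1.symm, hdega⟩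
  have hxAr' : x ∉ A r' := by
    intro hxr'
    exact hr'x (memDN.mpr ⟨(memA.mp hxr').1.symm, hdr'⟩)
  have hAqr' : A r' ≠ A q := by
    intro h
    exact hxAr' (h ▸ hxq)
  have hinter' : (A q ∩ A r').card = Δ - 3 :=
    h3 q r' hdq hdr' (fun h => hAqr' h.symm) ⟨a, Finset.mem_inter.mpr ⟨haq, haAr'⟩⟩
  have hdiff1' : (A q \ A r').card = 1 := by
    have := Finset.card_inter_add_card_sdiff (A q) (A r')
    omega
  have := htwo_in_diff r' hdr' hxAr'
  omega

end HZaux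

/-- Corollary 2.6: let `G` be an HZ-graph with maximum degree `Δ ≥ 7` such that
(i) adjacent `(Δ−1)`-vertices have the same `Δ`-neighborhood, (ii) adjacent
`Δ`-vertices have the same `(Δ−1)`-neighborhood, and (iii) any two `Δ`-vertices with
distinct but intersecting `(Δ−1)`-neighborhoods share exactly `Δ−3` common
`(Δ−1)`-neighbors.  If some two `Δ`-vertices have distinct `(Δ−1)`-neighborhoods,
then `V_{Δ−1}` is an independent set in `G`. -/
theorem hz_small_vertices_independent {V : Type*} [Fintype V] [DecidableEq V]
    (G : SimpleGraph V) [DecidableRel G.Adj] (Δ : ℕ) (hΔdef : Δ = G.maxDegree)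
    (hΔ : 7 ≤ Δ)
    (hconn : G.Connected) (hclass2 : chromaticIndex G = Δ + 1)
    (hcore : ∀ v : V, G.degree v = Δ →
      ((G.neighborFinset v).filter (fun w => G.degree w = Δ)).card ≤ 2)
    (h1 : ∀ x y : V, G.Adj x y → G.degree x = Δ - 1 → G.degree y = Δ - 1 →
      (G.neighborFinset x).filter (fun w => G.degree w = Δ) =
        (G.neighborFinset y).filter (fun w => G.degree w = Δ))
    (h2 : ∀ u v : V, G.Adj u v → G.degree u = Δ → G.degree v = Δ →
      (G.neighborFinset u).filter (fun w => G.degree w = Δ - 1) =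
        (G.neighborFinset v).filter (fun w => G.degree w = Δ - 1))
    (h3 : ∀ u v : V, G.degree u = Δ → G.degree v = Δ →
      (G.neighborFinset u).filter (fun w => G.degree w = Δ - 1) ≠
        (G.neighborFinset v).filter (fun w => G.degree w = Δ - 1) →
      ((G.neighborFinset u).filter (fun w => G.degree w = Δ - 1) ∩
        (G.neighborFinset v).filter (fun w => G.degree w = Δ - 1)).Nonempty →
      ((G.neighborFinset u).filter (fun w => G.degree w = Δ - 1) ∩
        (G.neighborFinset v).filter (fun w => G.degree w = Δ - 1)).card = Δ - 3)
    (hex : ∃ u v : V, G.degree u = Δ ∧ G.degree v = Δ ∧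
      (G.neighborFinset u).filter (fun w => G.degree w = Δ - 1) ≠
        (G.neighborFinset v).filter (fun w => G.degree w = Δ - 1)) :
    ∀ x y : V, G.degree x = Δ - 1 → G.degree y = Δ - 1 → ¬ G.Adj x y := by
  intro x y hx hy hadj
  have hnc : ¬ ECol G.edgeFinset Δ := by
    rintro ⟨C, hC1, hC2⟩
    have hproper : IsProperEdgeColoring G Δ C := by
      refine ⟨fun e he => hC1 e (SimpleGraph.mem_edgeFinset.mpr he),
        fun e₁ he₁ e₂ he₂ => hC2 e₁ (SimpleGraph.mem_edgeFinset.mpr he₁)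
          e₂ (SimpleGraph.mem_edgeFinset.mpr he₂)⟩
    have hle : chromaticIndex G ≤ Δ := Nat.sInf_le ⟨C, hproper⟩
    rw [hclass2] at hle
    omega
  have hmax : ∀ z, G.degree z ≤ Δ := fun z => hΔdef ▸ G.degree_le_maxDegree z
  obtain ⟨hge, htwo⟩ := hz_structure (by omega : 1 ≤ Δ) hmax hconn hnc hcore
  have hdich : ∀ z, G.degree z = Δ ∨ G.degree z = Δ - 1 := by
    intro z
    have h1' := hge z
    have h2' := hmax z
    omega
  exact endgame (G := G) (Δ := Δ)
    (fun u => (G.neighborFinset u).filter (fun w => G.degree w = Δ - 1))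
    (fun u => (G.neighborFinset u).filter (fun w => G.degree w = Δ))
    (fun _ => rfl) (fun _ => rfl) hΔ hdich htwo hcore hconn h1 h2 h3 hex hx hy hadj
end

section
/- Let G be an HZ-graph with maximum degree Δ ≥ 3, r ∈ V_Δ, s₁ ∈ N_{Δ−1}(r), φ ∈ C^Δ(G − rs₁), and F = F_φ(r, s₁:s_p) a multifan all of whose non-center vertices have degree Δ−1. Then there exist a coloring φ' ∈ C^Δ(G − rs_p) and a multifan F* centered at r with respect to rs_p and φ' such that V(F*) = V(F) and F* has only one inducing sequence (i.e., F* is typical 2-inducing after relabeling). -/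
open SimpleGraph

/-- The set of colors in `[0, k)` missing at `v` under the edge coloring `C` of `G`. -/
def missingColors {V : Type*} (G : SimpleGraph V) (k : ℕ) (C : Sym2 V → ℕ) (v : V) :
    Set ℕ :=
  {c | c < k ∧ ∀ w, G.Adj v w → C s(v, w) ≠ c}

/-- Lemma 3.3: let `G` be an HZ-graph with `Δ ≥ 3`, `r` a `Δ`-vertex,
`s₁ = f 1 ∈ N_{Δ−1}(r)`, `φ ∈ C^Δ(G − r f(1))` and `F = (r, f 1, …, f p)` a multifan
all of whose non-central vertices have degree `Δ − 1`.  Then there are a coloring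
`φ' ∈ C^Δ(G − r f(p))` and a multifan `F* = (r, g 1, …, g p)` centered at `r` with
respect to `r f(p)` and `φ'` such that `V(F*) = V(F)`, `g 1 = f p`, and `F*` has only
one inducing sequence: the color of each edge `r g(i)` is missing at the immediately
preceding vertex `g(i−1)`. -/
theorem multifan_one_sequence {V : Type*} [Fintype V] [DecidableEq V]
    (G : SimpleGraph V) [DecidableRel G.Adj] (Δ : ℕ) (hΔdef : Δ = G.maxDegree)
    (hΔ3 : 3 ≤ Δ)
    (hconn : G.Connected) (hclass2 : chromaticIndex G = Δ + 1)
    (hcore : ∀ v : V, G.degree v = Δ →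
      ((G.neighborFinset v).filter (fun w => G.degree w = Δ)).card ≤ 2)
    (r : V) (hr : G.degree r = Δ)
    (p : ℕ) (hp : 1 ≤ p) (f : ℕ → V) (hinj : Set.InjOn f (Set.Icc 1 p))
    (hnbr : ∀ i ∈ Set.Icc 1 p, G.Adj r (f i) ∧ G.degree (f i) = Δ - 1)
    (φ : Sym2 V → ℕ)
    (hφ : IsProperEdgeColoring (G.deleteEdges {s(r, f 1)}) Δ φ)
    (hfan : ∀ i ∈ Set.Icc 2 p, ∃ j ∈ Set.Icc 1 (i - 1),
      φ s(r, f i) ∈ missingColors (G.deleteEdges {s(r, f 1)}) Δ φ (f j)) :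
    ∃ (φ' : Sym2 V → ℕ) (g : ℕ → V),
      IsProperEdgeColoring (G.deleteEdges {s(r, f p)}) Δ φ' ∧
      g 1 = f p ∧
      Set.InjOn g (Set.Icc 1 p) ∧
      g '' Set.Icc 1 p = f '' Set.Icc 1 p ∧
      (∀ i ∈ Set.Icc 2 p,
        φ' s(r, g i) ∈ missingColors (G.deleteEdges {s(r, f p)}) Δ φ' (g (i - 1))) := by
  classical
  rcases eq_or_lt_of_le hp with hp1 | hp2
  · -- trivial case p = 1
    subst hp1
    refine ⟨φ, f, hφ, rfl, hinj, rfl, ?_⟩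
    intro i hi
    rw [Set.mem_Icc] at hi
    omega
  -- main case : 2 ≤ p
  have hadj : ∀ i, i ∈ Set.Icc 1 p → G.Adj r (f i) := fun i hi => (hnbr i hi).1
  have hfr : ∀ i, i ∈ Set.Icc 1 p → f i ≠ r := fun i hi => (hadj i hi).ne'
  have h1p : (1:ℕ) ∈ Set.Icc 1 p := Set.mem_Icc.mpr ⟨le_refl 1, hp⟩
  have hpp : p ∈ Set.Icc 1 p := Set.mem_Icc.mpr ⟨hp, le_refl p⟩
  have hsub : ∀ i, i ∈ Set.Icc 2 p → i ∈ Set.Icc 1 p := by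
    intro i hi; rw [Set.mem_Icc] at *; omega
  have hs_ne : ∀ i j, i ∈ Set.Icc 1 p → j ∈ Set.Icc 1 p → s(r, f i) = s(r, f j) → i = j := by
    intro i j hi hj h
    rw [Sym2.eq_iff] at h
    rcases h with ⟨-, h⟩ | ⟨h1, h2⟩
    · exact hinj hi hj h
    · exact absurd h1.symm (hfr j hj)
  have hedgeH : ∀ i, i ∈ Set.Icc 2 p → s(r, f i) ∈ (G.deleteEdges {s(r, f 1)}).edgeSet := by
    intro i hi
    rw [SimpleGraph.mem_edgeSet, SimpleGraph.deleteEdges_adj]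
    refine ⟨hadj i (hsub i hi), ?_⟩
    intro hmem
    rw [Set.mem_singleton_iff] at hmem
    have := hs_ne i 1 (hsub i hi) h1p hmem
    rw [Set.mem_Icc] at hi; omega
  have hcol_inj : ∀ (x w₁ w₂ : V), (G.deleteEdges {s(r, f 1)}).Adj x w₁ →
      (G.deleteEdges {s(r, f 1)}).Adj x w₂ → w₁ ≠ w₂ → φ s(x, w₁) ≠ φ s(x, w₂) := by
    intro x w₁ w₂ h1 h2 hne
    refine hφ.2 _ ((SimpleGraph.mem_edgeSet _).mpr h1) _ ((SimpleGraph.mem_edgeSet _).mpr h2) ?_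
      ⟨x, by simp, by simp⟩
    intro he; rw [Sym2.eq_iff] at he
    rcases he with ⟨-, h⟩ | ⟨h, h'⟩
    · exact hne h
    · rw [h'] at h1; exact h1.ne rfl
  have hcinj : ∀ i j, i ∈ Set.Icc 2 p → j ∈ Set.Icc 2 p → i ≠ j →
      φ s(r, f i) ≠ φ s(r, f j) := by
    intro i j hi hj hne
    refine hcol_inj r (f i) (f j) ((SimpleGraph.mem_edgeSet _).mp (hedgeH i hi))
      ((SimpleGraph.mem_edgeSet _).mp (hedgeH j hj)) ?_
    intro h; exact hne (hinj (hsub i hi) (hsub j hj) h)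
  obtain ⟨J, hJspec, hJtriv⟩ :
      ∃ J : ℕ → ℕ, (∀ i, i ∈ Set.Icc 2 p →
          J i ∈ Set.Icc 1 (i - 1) ∧
          φ s(r, f i) ∈ missingColors (G.deleteEdges {s(r, f 1)}) Δ φ (f (J i))) ∧
        (∀ i, i ∉ Set.Icc 2 p → J i = 1) := by
    refine ⟨fun i => if h : i ∈ Set.Icc 2 p then (hfan i h).choose else 1, ?_, ?_⟩
    · intro i hi
      simp only [dif_pos hi]
      exact (hfan i hi).choose_spec
    · intro i hi; simp only [dif_neg hi]
  have hJlt : ∀ i, i ∈ Set.Icc 2 p → 1 ≤ J i ∧ J i < i ∧ J i ≤ p := by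
    intro i hi
    have h1 := (hJspec i hi).1
    rw [Set.mem_Icc] at h1 hi
    omega
  obtain ⟨q, hq0, hqS⟩ : ∃ q : ℕ → ℕ, q 0 = p ∧ ∀ k, q (k + 1) = J (q k) :=
    ⟨fun k => J^[k] p, rfl, fun k => Function.iterate_succ_apply' J k p⟩
  have hq_mem : ∀ k, q k ∈ Set.Icc 1 p := by
    intro k; induction k with
    | zero => rw [hq0]; exact hpp
    | succ k ih =>
      rw [hqS]
      by_cases h : q k ∈ Set.Icc 2 p
      · have := hJlt _ h; rw [Set.mem_Icc]; omega
      · rw [hJtriv _ h]; exact h1p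
  have hq_dec : ∀ k, q k ≠ 1 → q (k+1) < q k := by
    intro k h
    have hk2 : q k ∈ Set.Icc 2 p := by
      have := hq_mem k; rw [Set.mem_Icc] at *; omega
    rw [hqS]; exact (hJlt _ hk2).2.1
  have hq_ex : ∃ k, q k = 1 := by
    have key : ∀ k, q k = 1 ∨ q k + k ≤ p := by
      intro k; induction k with
      | zero => rw [hq0]; omega
      | succ k ih =>
        rcases ih with h | h
        · left; rw [hqS, h, hJtriv 1 (by rw [Set.mem_Icc]; omega)]
        · by_cases h1 : q k = 1
          · left; rw [hqS, h1, hJtriv 1 (by rw [Set.mem_Icc]; omega)]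
          · right; have := hq_dec k h1; omega
    rcases key p with h | h
    · exact ⟨p, h⟩
    · have := hq_mem p; rw [Set.mem_Icc] at this; exact ⟨p, by omega⟩
  set t := Nat.find hq_ex with ht_def
  have hqt : q t = 1 := Nat.find_spec hq_ex
  have hq_ne1 : ∀ k, k < t → q k ≠ 1 := fun k hk => Nat.find_min hq_ex hk
  have hq2 : ∀ k, k < t → q k ∈ Set.Icc 2 p := by
    intro k hk; have h1 := hq_mem k; have h2 := hq_ne1 k hk
    rw [Set.mem_Icc] at *; omega
  have ht1 : 1 ≤ t := by
    rcases Nat.eq_zero_or_pos t with h | h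
    · exfalso; have h2 := hqt; rw [h, hq0] at h2; omega
    · exact h
  have hq_strict : ∀ j k, j < k → k ≤ t → q k < q j := by
    intro j k hjk hkt
    induction k with
    | zero => omega
    | succ k ih =>
      have hlt : q (k+1) < q k := hq_dec k (hq_ne1 k (by omega))
      rcases Nat.lt_or_ge j k with h | h
      · exact lt_trans hlt (ih h (by omega))
      · have hjk2 : j = k := by omega
        rw [hjk2]; exact hlt
  have hq_inj : ∀ j k, j ≤ t → k ≤ t → q j = q k → j = k := by
    intro j k hj hk h
    rcases lt_trichotomy j k with hl | he | hl
    · have := hq_strict j k hl hk; omega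
    · exact he
    · have := hq_strict k j hl hj; omega
  have htp : t + 1 ≤ p := by
    have key : ∀ d, d ≤ t → d + 1 ≤ q (t - d) := by
      intro d; induction d with
      | zero => intro _; rw [Nat.sub_zero, hqt]
      | succ d ih =>
        intro hd
        have h1 : d + 1 ≤ q (t - d) := ih (by omega)
        have he : t - (d+1) + 1 = t - d := by omega
        have h2 : q (t - (d+1) + 1) < q (t - (d+1)) := hq_dec _ (hq_ne1 _ (by omega))
        rw [he] at h2; omega
    have := key t (le_refl t); rw [Nat.sub_self, hq0] at this; omega
  -- every non-first fan vertex misses exactly one color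
  have hsingle : ∀ j, j ∈ Set.Icc 2 p → ∀ c₁ c₂,
      c₁ ∈ missingColors (G.deleteEdges {s(r, f 1)}) Δ φ (f j) →
      c₂ ∈ missingColors (G.deleteEdges {s(r, f 1)}) Δ φ (f j) → c₁ = c₂ := by
    intro j hj c₁ c₂ hc₁ hc₂
    have hnb : ∀ w, (G.deleteEdges {s(r, f 1)}).Adj (f j) w ↔ G.Adj (f j) w := by
      intro w
      rw [SimpleGraph.deleteEdges_adj, Set.mem_singleton_iff]
      constructor
      · exact fun h => h.1
      · intro h
        refine ⟨h, ?_⟩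
        intro he
        rw [Sym2.eq_iff] at he
        rcases he with ⟨h1, h2⟩ | ⟨h1, h2⟩
        · exact hfr j (hsub j hj) h1
        · have := hinj (hsub j hj) h1p h1
          rw [Set.mem_Icc] at hj; omega
    have hdegx : (G.neighborFinset (f j)).card = Δ - 1 := (hnbr j (hsub j hj)).2
    have hIcard : ((G.neighborFinset (f j)).image (fun w => φ s(f j, w))).card = Δ - 1 := by
      rw [Finset.card_image_of_injOn, hdegx]
      intro w₁ hw₁ w₂ hw₂ he
      by_contra hne
      exact hcol_inj (f j) w₁ w₂
        ((hnb w₁).mpr (by rwa [Finset.mem_coe, SimpleGraph.mem_neighborFinset] at hw₁))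
        ((hnb w₂).mpr (by rwa [Finset.mem_coe, SimpleGraph.mem_neighborFinset] at hw₂)) hne he
    have hIsub : (G.neighborFinset (f j)).image (fun w => φ s(f j, w)) ⊆ Finset.range Δ := by
      intro col hcol
      rw [Finset.mem_image] at hcol
      obtain ⟨w, hw, rfl⟩ := hcol
      rw [Finset.mem_range]
      refine hφ.1 _ ((SimpleGraph.mem_edgeSet _).mpr ?_)
      exact (hnb w).mpr (by rwa [SimpleGraph.mem_neighborFinset] at hw)
    have hcard : (Finset.range Δ \ (G.neighborFinset (f j)).image (fun w => φ s(f j, w))).card = 1 := by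
      rw [Finset.card_sdiff_of_subset hIsub, Finset.card_range, hIcard]; omega
    have hmem : ∀ col, col ∈ missingColors (G.deleteEdges {s(r, f 1)}) Δ φ (f j) →
        col ∈ Finset.range Δ \ (G.neighborFinset (f j)).image (fun w => φ s(f j, w)) := by
      intro col hcol
      simp only [missingColors, Set.mem_setOf_eq] at hcol
      rw [Finset.mem_sdiff, Finset.mem_range]
      refine ⟨hcol.1, ?_⟩
      intro hcolI
      rw [Finset.mem_image] at hcolI
      obtain ⟨w, hw, hww⟩ := hcolI
      exact hcol.2 w ((hnb w).mpr (by rwa [SimpleGraph.mem_neighborFinset] at hw)) hww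
    exact Finset.card_le_one.mp (le_of_eq hcard) _ (hmem c₁ hc₁) _ (hmem c₂ hc₂)
  -- f 1 misses exactly two colors
  have htwo : ∀ c₁ c₂ c₃,
      c₁ ∈ missingColors (G.deleteEdges {s(r, f 1)}) Δ φ (f 1) →
      c₂ ∈ missingColors (G.deleteEdges {s(r, f 1)}) Δ φ (f 1) →
      c₃ ∈ missingColors (G.deleteEdges {s(r, f 1)}) Δ φ (f 1) →
      c₁ ≠ c₂ → c₁ ≠ c₃ → c₂ ≠ c₃ → False := by
    intro c₁ c₂ c₃ hc₁ hc₂ hc₃ h12 h13 h23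
    have hr1 : r ∈ G.neighborFinset (f 1) :=
      (SimpleGraph.mem_neighborFinset _ _ _).mpr (hadj 1 h1p).symm
    have hnb : ∀ w, (G.deleteEdges {s(r, f 1)}).Adj (f 1) w ↔
        w ∈ (G.neighborFinset (f 1)).erase r := by
      intro w
      rw [SimpleGraph.deleteEdges_adj, Set.mem_singleton_iff, Finset.mem_erase,
        SimpleGraph.mem_neighborFinset]
      constructor
      · intro ⟨h1, h2⟩
        refine ⟨?_, h1⟩
        intro hwr
        exact h2 (by rw [hwr, Sym2.eq_swap])
      · intro ⟨h1, h2⟩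
        refine ⟨h2, ?_⟩
        intro he
        rw [Sym2.eq_iff] at he
        rcases he with ⟨ha, hb⟩ | ⟨ha, hb⟩
        · exact hfr 1 h1p ha
        · exact h1 hb
    have hNcard : ((G.neighborFinset (f 1)).erase r).card = Δ - 2 := by
      rw [Finset.card_erase_of_mem hr1]
      have : (G.neighborFinset (f 1)).card = Δ - 1 := (hnbr 1 h1p).2
      omega
    have hIcard : (((G.neighborFinset (f 1)).erase r).image (fun w => φ s(f 1, w))).card = Δ - 2 := by
      rw [Finset.card_image_of_injOn, hNcard]
      intro w₁ hw₁ w₂ hw₂ he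
      by_contra hne
      exact hcol_inj (f 1) w₁ w₂ ((hnb w₁).mpr (Finset.mem_coe.mp hw₁))
        ((hnb w₂).mpr (Finset.mem_coe.mp hw₂)) hne he
    have hIsub : ((G.neighborFinset (f 1)).erase r).image (fun w => φ s(f 1, w)) ⊆ Finset.range Δ := by
      intro col hcol
      rw [Finset.mem_image] at hcol
      obtain ⟨w, hw, rfl⟩ := hcol
      rw [Finset.mem_range]
      exact hφ.1 _ ((SimpleGraph.mem_edgeSet _).mpr ((hnb w).mpr hw))
    have hcard : (Finset.range Δ \ ((G.neighborFinset (f 1)).erase r).image (fun w => φ s(f 1, w))).card = 2 := by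
      rw [Finset.card_sdiff_of_subset hIsub, Finset.card_range, hIcard]; omega
    have hmem : ∀ col, col ∈ missingColors (G.deleteEdges {s(r, f 1)}) Δ φ (f 1) →
        col ∈ Finset.range Δ \ ((G.neighborFinset (f 1)).erase r).image (fun w => φ s(f 1, w)) := by
      intro col hcol
      simp only [missingColors, Set.mem_setOf_eq] at hcol
      rw [Finset.mem_sdiff, Finset.mem_range]
      refine ⟨hcol.1, ?_⟩
      intro hcolI
      rw [Finset.mem_image] at hcolI
      obtain ⟨w, hw, hww⟩ := hcolI
      exact hcol.2 w ((hnb w).mpr hw) hww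
    have hsub3 : ({c₁, c₂, c₃} : Finset ℕ) ⊆
        Finset.range Δ \ ((G.neighborFinset (f 1)).erase r).image (fun w => φ s(f 1, w)) := by
      intro x hx
      simp only [Finset.mem_insert, Finset.mem_singleton] at hx
      rcases hx with rfl | rfl | rfl
      · exact hmem _ hc₁
      · exact hmem _ hc₂
      · exact hmem _ hc₃
    have h3 : ({c₁, c₂, c₃} : Finset ℕ).card = 3 :=
      Finset.card_eq_three.mpr ⟨c₁, c₂, c₃, h12, h13, h23, rfl⟩
    have := Finset.card_le_card hsub3
    rw [h3, hcard] at this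
    omega
  -- the color of edge r-q k is missing at f (q (k+1))
  have hL4 : ∀ k, k < t →
      φ s(r, f (q k)) ∈ missingColors (G.deleteEdges {s(r, f 1)}) Δ φ (f (q (k+1))) := by
    intro k hk
    have h := (hJspec (q k) (hq2 k hk)).2
    rw [← hqS k] at h
    exact h
  have hcqlt : ∀ k, k < t → φ s(r, f (q k)) < Δ := fun k hk =>
    hφ.1 _ (hedgeH _ (hq2 k hk))
  -- construction of the shifted coloring
  obtain ⟨φ', hch, hnc⟩ :
      ∃ φ' : Sym2 V → ℕ,
        (∀ k, k < t → φ' s(r, f (q (k+1))) = φ s(r, f (q k))) ∧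
        (∀ e : Sym2 V, (∀ k, k < t → e ≠ s(r, f (q (k+1)))) → φ' e = φ e) := by
    have huniq : ∀ (e : Sym2 V) (k k' : ℕ), k < t → k' < t → e = s(r, f (q (k+1))) →
        e = s(r, f (q (k'+1))) → k = k' := by
      intro e k k' hk hk' h1 h2
      rw [h1] at h2
      have h3 := hs_ne _ _ (hq_mem (k+1)) (hq_mem (k'+1)) h2
      have := hq_inj (k+1) (k'+1) (by omega) (by omega) h3
      omega
    refine ⟨fun e => if h : ∃ k, k < t ∧ e = s(r, f (q (k+1))) then
        φ s(r, f (q h.choose)) else φ e, ?_, ?_⟩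
    · intro k hk
      have hex : ∃ k', k' < t ∧ s(r, f (q (k+1))) = s(r, f (q (k'+1))) := ⟨k, hk, rfl⟩
      simp only [dif_pos hex]
      have hspec := hex.choose_spec
      have heq : hex.choose = k := huniq _ _ _ hspec.1 hk hspec.2 rfl
      rw [heq]
    · intro e he
      have hnex : ¬ ∃ k, k < t ∧ e = s(r, f (q (k+1))) := by
        rintro ⟨k, hk, hke⟩; exact he k hk hke
      simp only [dif_neg hnex]
  have hf1ch : s(r, f 1) = s(r, f (q (t - 1 + 1))) := by
    rw [show t - 1 + 1 = t by omega, hqt]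
  -- unchanged edges of G - r f p lie in G - r f 1
  have hunchH : ∀ e : Sym2 V, e ∈ (G.deleteEdges {s(r, f p)}).edgeSet →
      (∀ k, k < t → e ≠ s(r, f (q (k+1)))) → e ∈ (G.deleteEdges {s(r, f 1)}).edgeSet := by
    intro e he hnch
    rw [SimpleGraph.edgeSet_deleteEdges] at he ⊢
    refine ⟨he.1, ?_⟩
    intro h
    rw [Set.mem_singleton_iff] at h
    exact hnch (t-1) (by omega) (by rw [h, hf1ch])
  have hφ'_unch : ∀ (x w : V), x ≠ r → w ≠ r → φ' s(x, w) = φ s(x, w) := by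
    intro x w hx hw
    refine hnc _ ?_
    intro k hk he
    have : r ∈ s(x, w) := by rw [he]; simp
    rw [Sym2.mem_iff] at this
    rcases this with h | h
    · exact hx h.symm
    · exact hw h.symm
  -- unchanged edges adjacent to a shifted edge avoid its new color
  have hkey : ∀ e : Sym2 V, e ∈ (G.deleteEdges {s(r, f p)}).edgeSet →
      (∀ k, k < t → e ≠ s(r, f (q (k+1)))) → ∀ k, k < t →
      (∃ v, v ∈ e ∧ v ∈ s(r, f (q (k+1)))) → φ e ≠ φ s(r, f (q k)) := by
    intro e he hnch k hk hsh
    obtain ⟨v, hv1, hv2⟩ := hsh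
    rw [Sym2.mem_iff] at hv2
    rcases hv2 with rfl | rfl
    · -- v = r
      refine hφ.2 _ (hunchH _ he hnch) _ (hedgeH _ (hq2 k hk)) ?_ ⟨v, hv1, by simp⟩
      intro h
      rcases Nat.eq_zero_or_pos k with hk0 | hk1
      · rw [SimpleGraph.edgeSet_deleteEdges] at he
        rw [hk0, hq0] at h
        exact he.2 (Set.mem_singleton_iff.mpr h)
      · refine hnch (k-1) (by omega) ?_
        rwa [show k - 1 + 1 = k by omega]
    · -- v = f (q (k+1))
      obtain ⟨w, rfl⟩ := Sym2.mem_iff_exists.mp hv1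
      by_cases hwr : w = r
      · exact absurd (by rw [hwr, Sym2.eq_swap]) (hnch k hk)
      · have hm := hL4 k hk
        simp only [missingColors, Set.mem_setOf_eq] at hm
        exact hm.2 w ((SimpleGraph.mem_edgeSet _).mp (hunchH _ he hnch))
  have hproper' : IsProperEdgeColoring (G.deleteEdges {s(r, f p)}) Δ φ' := by
    constructor
    · intro e he
      by_cases hc : ∃ k, k < t ∧ e = s(r, f (q (k+1)))
      · obtain ⟨k, hk, rfl⟩ := hc
        rw [hch k hk]
        exact hcqlt k hk
      · push_neg at hc
        rw [hnc e hc]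
        exact hφ.1 _ (hunchH e he hc)
    · intro e₁ he₁ e₂ he₂ hne hsh
      by_cases hc₁ : ∃ k, k < t ∧ e₁ = s(r, f (q (k+1))) <;>
        by_cases hc₂ : ∃ k, k < t ∧ e₂ = s(r, f (q (k+1)))
      · obtain ⟨k₁, hk₁, rfl⟩ := hc₁
        obtain ⟨k₂, hk₂, rfl⟩ := hc₂
        rw [hch k₁ hk₁, hch k₂ hk₂]
        refine hcinj (q k₁) (q k₂) (hq2 k₁ hk₁) (hq2 k₂ hk₂) ?_
        intro h
        exact hne (by rw [hq_inj k₁ k₂ (by omega) (by omega) h])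
      · obtain ⟨k₁, hk₁, rfl⟩ := hc₁
        push_neg at hc₂
        rw [hch k₁ hk₁, hnc e₂ hc₂]
        obtain ⟨v, hv1, hv2⟩ := hsh
        exact (hkey e₂ he₂ hc₂ k₁ hk₁ ⟨v, hv2, hv1⟩).symm
      · obtain ⟨k₂, hk₂, rfl⟩ := hc₂
        push_neg at hc₁
        rw [hch k₂ hk₂, hnc e₁ hc₁]
        obtain ⟨v, hv1, hv2⟩ := hsh
        exact hkey e₁ he₁ hc₁ k₂ hk₂ ⟨v, hv1, hv2⟩
      · push_neg at hc₁; push_neg at hc₂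
        rw [hnc e₁ hc₁, hnc e₂ hc₂]
        exact hφ.2 _ (hunchH e₁ he₁ hc₁) _ (hunchH e₂ he₂ hc₂) hne hsh
  have hunchAdj : ∀ (x w : V), x ≠ r → w ≠ r → (G.deleteEdges {s(r, f p)}).Adj x w →
      (G.deleteEdges {s(r, f 1)}).Adj x w := by
    intro x w hx hw hadj'
    rw [SimpleGraph.deleteEdges_adj] at hadj' ⊢
    refine ⟨hadj'.1, ?_⟩
    intro he
    rw [Set.mem_singleton_iff] at he
    have : r ∈ s(x, w) := by rw [he]; simp
    rw [Sym2.mem_iff] at this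
    rcases this with h | h
    · exact hx h.symm
    · exact hw h.symm
  -- M1 : each chain vertex misses its old edge color in the new coloring
  have hM1 : ∀ k, k < t →
      φ s(r, f (q k)) ∈ missingColors (G.deleteEdges {s(r, f p)}) Δ φ' (f (q k)) := by
    intro k hk
    simp only [missingColors, Set.mem_setOf_eq]
    refine ⟨hcqlt k hk, ?_⟩
    intro w hw
    by_cases hwr : w = r
    · rcases Nat.eq_zero_or_pos k with hk0 | hk1
      · exfalso
        rw [hwr, hk0, hq0, SimpleGraph.deleteEdges_adj] at hw
        exact hw.2 (Set.mem_singleton_iff.mpr Sym2.eq_swap)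
      · have hkk : k - 1 + 1 = k := by omega
        have e1 : s(f (q k), w) = s(r, f (q (k - 1 + 1))) := by
          rw [hwr, hkk, Sym2.eq_swap]
        rw [e1, hch (k-1) (by omega)]
        refine hcinj (q (k-1)) (q k) (hq2 _ (by omega)) (hq2 _ hk) ?_
        intro h
        have := hq_inj (k-1) k (by omega) (by omega) h
        omega
    · rw [hφ'_unch _ _ (hfr _ (hsub _ (hq2 k hk))) hwr]
      rw [show s(r, f (q k)) = s(f (q k), r) from Sym2.eq_swap]
      exact hcol_inj (f (q k)) w r (hunchAdj _ _ (hfr _ (hsub _ (hq2 k hk))) hwr hw)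
        (((SimpleGraph.mem_edgeSet _).mp (hedgeH _ (hq2 k hk))).symm) hwr
  -- M2 : colors missing at f 1 other than the newly used one stay missing
  have hM2 : ∀ col, col ∈ missingColors (G.deleteEdges {s(r, f 1)}) Δ φ (f 1) →
      col ≠ φ s(r, f (q (t-1))) →
      col ∈ missingColors (G.deleteEdges {s(r, f p)}) Δ φ' (f 1) := by
    intro col hcol hne
    simp only [missingColors, Set.mem_setOf_eq] at hcol ⊢
    refine ⟨hcol.1, ?_⟩
    intro w hw
    by_cases hwr : w = r
    · have e1 : s(f 1, w) = s(r, f (q (t - 1 + 1))) := by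
        rw [hwr, show t - 1 + 1 = t by omega, hqt, Sym2.eq_swap]
      rw [e1, hch (t-1) (by omega)]
      exact fun h => hne (h.symm)
    · rw [hφ'_unch _ _ (hfr 1 h1p) hwr]
      exact hcol.2 w (hunchAdj _ _ (hfr 1 h1p) hwr hw)
  -- M3 : missing colors at off-chain vertices stay missing
  have hM3 : ∀ y, y ∈ Set.Icc 2 p → (∀ k, k ≤ t → q k ≠ y) → ∀ col,
      col ∈ missingColors (G.deleteEdges {s(r, f 1)}) Δ φ (f y) →
      col ∈ missingColors (G.deleteEdges {s(r, f p)}) Δ φ' (f y) := by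
    intro y hy hyc col hcol
    simp only [missingColors, Set.mem_setOf_eq] at hcol ⊢
    refine ⟨hcol.1, ?_⟩
    intro w hw
    by_cases hwr : w = r
    · have e1 : s(f y, w) = s(r, f y) := by rw [hwr, Sym2.eq_swap]
      rw [e1]
      have hnchy : ∀ k, k < t → s(r, f y) ≠ s(r, f (q (k+1))) := by
        intro k hk he
        have := hs_ne _ _ (hsub y hy) (hq_mem (k+1)) he
        exact hyc (k+1) (by omega) this.symm
      rw [hnc _ hnchy]
      have hHadj : (G.deleteEdges {s(r, f 1)}).Adj (f y) r :=
        ((SimpleGraph.mem_edgeSet _).mp (hedgeH y hy)).symm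
      have := hcol.2 r hHadj
      rwa [show s(f y, r) = s(r, f y) from Sym2.eq_swap] at this
    · rw [hφ'_unch _ _ (hfr _ (hsub y hy)) hwr]
      exact hcol.2 w (hunchAdj _ _ (hfr _ (hsub y hy)) hwr hw)
  -- the off-chain vertices
  set InR : ℕ → Prop := fun x => x ∈ Set.Icc 1 p ∧ ∀ k, k ≤ t → q k ≠ x with hInR_def
  have hInR2 : ∀ x, InR x → x ∈ Set.Icc 2 p := by
    intro x hx
    have h1 := hx.1
    have h2 := hx.2 t (le_refl t)
    rw [hqt] at h2
    rw [Set.mem_Icc] at *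
    omega
  have hClaimA : ∀ x, InR x → InR (J x) ∨ J x = 1 := by
    intro x hx
    have hx2 := hInR2 x hx
    have hJx := hJlt x hx2
    by_cases hchain : ∃ k, k ≤ t ∧ q k = J x
    · obtain ⟨k, hkt, hkq⟩ := hchain
      rcases Nat.eq_or_lt_of_le hkt with he | hl
      · right; rw [← hkq, he, hqt]
      · exfalso
        have hk1 : 1 ≤ k := by
          rcases Nat.eq_zero_or_pos k with h0 | h1
          · exfalso
            have hxp := Set.mem_Icc.mp hx2
            rw [h0, hq0] at hkq
            omega
          · exact h1
        have hm1 := (hJspec x hx2).2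
        rw [← hkq] at hm1
        have hm2 := hL4 (k-1) (by omega)
        rw [show k - 1 + 1 = k by omega] at hm2
        have := hsingle (q k) (hq2 k hl) _ _ hm1 hm2
        refine hcinj x (q (k-1)) hx2 (hq2 _ (by omega)) ?_ this
        intro h
        exact hx.2 (k-1) (by omega) h.symm
    · left
      push_neg at hchain
      exact ⟨Set.mem_Icc.mpr ⟨hJx.1, hJx.2.2⟩, fun k hk => hchain k hk⟩
  have hClaimB : ∀ x x', InR x → InR x' → J x = J x' → x = x' := by
    intro x x' hx hx' hJeq
    by_contra hne
    have hx2 := hInR2 x hx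
    have hx2' := hInR2 x' hx'
    have hm1 := (hJspec x hx2).2
    have hm2 := (hJspec x' hx2').2
    rw [← hJeq] at hm2
    by_cases hJ2 : J x ∈ Set.Icc 2 p
    · exact hcinj x x' hx2 hx2' hne (hsingle (J x) hJ2 _ _ hm1 hm2)
    · have hJ1 : J x = 1 := by
        have := hJlt x hx2
        rw [Set.mem_Icc] at hJ2
        omega
      rw [hJ1] at hm1 hm2
      have hm3 := hL4 (t-1) (by omega)
      rw [show t - 1 + 1 = t by omega, hqt] at hm3
      refine htwo _ _ _ hm1 hm2 hm3 (hcinj x x' hx2 hx2' hne) ?_ ?_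
      · refine hcinj x (q (t-1)) hx2 (hq2 _ (by omega)) ?_
        intro h; exact hx.2 (t-1) (by omega) h.symm
      · refine hcinj x' (q (t-1)) hx2' (hq2 _ (by omega)) ?_
        intro h; exact hx'.2 (t-1) (by omega) h.symm
  -- enumeration of the off-chain vertices as a single chain
  obtain ⟨a, ha0, haS⟩ : ∃ a : ℕ → ℕ, a 0 = 1 ∧ ∀ k,
      a (k+1) = if h : ∃ x, InR x ∧ J x = a k then h.choose else 0 :=
    ⟨fun k => Nat.rec 1 (fun _ ih => if h : ∃ x, InR x ∧ J x = ih then h.choose else 0) k,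
      rfl, fun k => rfl⟩
  have hInR0 : ¬ InR 0 := by
    intro h; have := h.1; rw [Set.mem_Icc] at this; omega
  have haS' : ∀ k, (∃ x, InR x ∧ J x = a k) → InR (a (k+1)) ∧ J (a (k+1)) = a k := by
    intro k hex
    rw [haS k, dif_pos hex]
    exact hex.choose_spec
  have hauniq : ∀ k x, InR x → J x = a k → a (k+1) = x := by
    intro k x hx hJ
    have h := haS' k ⟨x, hx, hJ⟩
    exact hClaimB _ _ h.1 hx (by rw [h.2, hJ])
  have haJ : ∀ k, InR (a (k+1)) → J (a (k+1)) = a k := by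
    intro k hk
    by_cases hex : ∃ x, InR x ∧ J x = a k
    · exact (haS' k hex).2
    · exfalso
      rw [haS k, dif_neg hex] at hk
      exact hInR0 hk
  have haInR_or : ∀ k, 1 ≤ k → InR (a k) ∨ a k = 0 := by
    intro k hk
    obtain ⟨k', rfl⟩ : ∃ k', k = k' + 1 := ⟨k - 1, by omega⟩
    by_cases hex : ∃ x, InR x ∧ J x = a k'
    · left; exact (haS' k' hex).1
    · right; rw [haS k', dif_neg hex]
  have hC : ∀ x, InR x → ∃ k, a (k+1) = x := by
    intro x
    induction x using Nat.strong_induction_on with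
    | _ x ih =>
      intro hx
      rcases hClaimA x hx with hJx | hJx
      · obtain ⟨k, hk⟩ := ih (J x) (hJlt x (hInR2 x hx)).2.1 hJx
        exact ⟨k + 1, hauniq (k+1) x hx hk.symm⟩
      · exact ⟨0, hauniq 0 x hx (by rw [ha0, hJx])⟩
  have hstep_lt : ∀ k, InR (a (k+1)) → a k < a (k+1) := by
    intro k hk
    have h := haJ k hk
    have := (hJlt _ (hInR2 _ hk)).2.1
    omega
  have hprefix : ∀ k, 1 ≤ k → InR (a (k+1)) → InR (a k) := by
    intro k hk hk1
    rcases haInR_or k hk with h | h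
    · exact h
    · exfalso
      have h1 := haJ k hk1
      have := (hJlt _ (hInR2 _ hk1)).1
      omega
  have hprefix' : ∀ k j, 1 ≤ j → j ≤ k → InR (a k) → InR (a j) := by
    intro k
    induction k with
    | zero => intro j h1 h2 _; omega
    | succ k ihk =>
      intro j h1 h2 hk
      rcases Nat.eq_or_lt_of_le h2 with he | hl
      · rw [he]; exact hk
      · exact ihk j h1 (by omega) (hprefix k (by omega) hk)
  have hmono : ∀ k j, j < k → InR (a k) → a j < a k := by
    intro k
    induction k with
    | zero => intro j h _; omega
    | succ k ihk =>
      intro j hj hk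
      have h1 : a k < a (k+1) := hstep_lt k hk
      rcases Nat.lt_or_ge j k with h | h
      · have hk' : InR (a k) := hprefix k (by omega) hk
        exact lt_trans (ihk j h hk') h1
      · have hjk : j = k := by omega
        rw [hjk]; exact h1
  -- counting the off-chain vertices
  set RFin : Finset ℕ := Finset.Icc 1 p \ (Finset.range (t+1)).image q with hRFin_def
  have hInRF : ∀ x, InR x ↔ x ∈ RFin := by
    intro x
    rw [hRFin_def, Finset.mem_sdiff, Finset.mem_Icc]
    simp only [hInR_def]
    constructor
    · intro ⟨h1, h2⟩
      refine ⟨Set.mem_Icc.mp h1, ?_⟩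
      intro hx
      rw [Finset.mem_image] at hx
      obtain ⟨k, hk, hkx⟩ := hx
      rw [Finset.mem_range] at hk
      exact h2 k (by omega) hkx
    · intro ⟨h1, h2⟩
      refine ⟨Set.mem_Icc.mpr h1, ?_⟩
      intro k hk hkx
      exact h2 (Finset.mem_image.mpr ⟨k, Finset.mem_range.mpr (by omega), hkx⟩)
  have hRFcard : RFin.card = p - (t+1) := by
    have hQsub : (Finset.range (t+1)).image q ⊆ Finset.Icc 1 p := by
      intro x hx
      rw [Finset.mem_image] at hx
      obtain ⟨k, _, rfl⟩ := hx
      exact Finset.mem_Icc.mpr (Set.mem_Icc.mp (hq_mem k))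
    have hQcard : ((Finset.range (t+1)).image q).card = t + 1 := by
      rw [Finset.card_image_of_injOn, Finset.card_range]
      intro j hj k hk h
      rw [Finset.mem_coe, Finset.mem_range] at hj hk
      exact hq_inj j k (by omega) (by omega) h
    rw [hRFin_def, Finset.card_sdiff_of_subset hQsub, hQcard, Nat.card_Icc]
    omega
  have hgood : ∀ j, 1 ≤ j → j ≤ p - (t+1) → InR (a j) := by
    by_contra hbad
    push_neg at hbad
    obtain ⟨j, hj1, hj2, hnj⟩ := hbad
    have hPex : ∃ j, 1 ≤ j ∧ j ≤ p - (t+1) ∧ ¬ InR (a j) := ⟨j, hj1, hj2, hnj⟩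
    set j₀ := Nat.find hPex with hj₀def
    obtain ⟨hj₀1, hj₀2, hj₀n⟩ := Nat.find_spec hPex
    have hsmall : ∀ x, InR x → ∃ k, 1 ≤ k ∧ k < j₀ ∧ a k = x := by
      intro x hx
      obtain ⟨k, hk⟩ := hC x hx
      refine ⟨k+1, by omega, ?_, hk⟩
      by_contra hge
      push_neg at hge
      have : InR (a j₀) := hprefix' (k+1) j₀ (by omega) hge (by rw [hk]; exact hx)
      exact hj₀n this
    have hsubim : RFin ⊆ (Finset.Icc 1 (j₀ - 1)).image a := by
      intro x hx
      obtain ⟨k, hk1, hk2, hk3⟩ := hsmall x ((hInRF x).mpr hx)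
      exact Finset.mem_image.mpr ⟨k, Finset.mem_Icc.mpr ⟨hk1, by omega⟩, hk3⟩
    have h1 := Finset.card_le_card hsubim
    have h2 := Finset.card_image_le (s := Finset.Icc 1 (j₀ - 1)) (f := a)
    rw [hRFcard] at h1
    rw [Nat.card_Icc] at h2
    omega
  have hcoverbd : ∀ x, InR x → ∃ k, 1 ≤ k ∧ k ≤ p - (t+1) ∧ a k = x := by
    intro x hx
    obtain ⟨k, hk⟩ := hC x hx
    refine ⟨k+1, by omega, ?_, hk⟩
    by_contra hge
    push_neg at hge
    have hIR : InR (a (k+1)) := by rw [hk]; exact hx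
    have hsubim : (Finset.Icc 1 (k+1)).image a ⊆ RFin := by
      intro y hy
      rw [Finset.mem_image] at hy
      obtain ⟨j, hj, rfl⟩ := hy
      rw [Finset.mem_Icc] at hj
      exact (hInRF _).mp (hprefix' (k+1) j hj.1 hj.2 hIR)
    have hinja : Set.InjOn a ↑(Finset.Icc 1 (k+1)) := by
      intro j₁ hj₁ j₂ hj₂ he
      rw [Finset.mem_coe, Finset.mem_Icc] at hj₁ hj₂
      rcases lt_trichotomy j₁ j₂ with h | h | h
      · have := hmono j₂ j₁ h (hprefix' (k+1) j₂ hj₂.1 hj₂.2 hIR); omega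
      · exact h
      · have := hmono j₁ j₂ h (hprefix' (k+1) j₁ hj₁.1 hj₁.2 hIR); omega
    have h1 := Finset.card_le_card hsubim
    rw [Finset.card_image_of_injOn hinja, Nat.card_Icc, hRFcard] at h1
    omega
  -- definition of the relabeling g
  obtain ⟨g, hg1, hg2⟩ : ∃ g : ℕ → V,
      (∀ i, i ≤ t + 1 → g i = f (q (i - 1))) ∧
      (∀ i, t + 1 < i → g i = f (a (i - (t+1)))) := by
    refine ⟨fun i => if i ≤ t+1 then f (q (i-1)) else f (a (i - (t+1))), ?_, ?_⟩
    · intro i hi; simp only [if_pos hi]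
    · intro i hi; simp only [if_neg (by omega : ¬ i ≤ t + 1)]
  refine ⟨φ', g, hproper', ?_, ?_, ?_, ?_⟩
  · rw [hg1 1 (by omega)]
    norm_num
    rw [hq0]
  · -- injectivity of g
    intro i hi j hj hgij
    rw [Set.mem_Icc] at hi hj
    by_cases hit : i ≤ t + 1 <;> by_cases hjt : j ≤ t + 1
    · rw [hg1 i hit, hg1 j hjt] at hgij
      have h1 := hinj (hq_mem (i-1)) (hq_mem (j-1)) hgij
      have := hq_inj (i-1) (j-1) (by omega) (by omega) h1
      omega
    · rw [hg1 i hit, hg2 j (by omega)] at hgij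
      have hInRa : InR (a (j - (t+1))) := hgood _ (by omega) (by omega)
      have heq := hinj (hq_mem (i-1)) hInRa.1 hgij
      exact absurd heq (hInRa.2 (i-1) (by omega))
    · rw [hg2 i (by omega), hg1 j hjt] at hgij
      have hInRa : InR (a (i - (t+1))) := hgood _ (by omega) (by omega)
      have heq := hinj hInRa.1 (hq_mem (j-1)) hgij
      exact absurd heq.symm (hInRa.2 (j-1) (by omega))
    · rw [hg2 i (by omega), hg2 j (by omega)] at hgij
      have hIi : InR (a (i - (t+1))) := hgood _ (by omega) (by omega)
      have hIj : InR (a (j - (t+1))) := hgood _ (by omega) (by omega)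
      have heq := hinj hIi.1 hIj.1 hgij
      rcases lt_trichotomy (i - (t+1)) (j - (t+1)) with h | h | h
      · have := hmono _ _ h hIj; omega
      · omega
      · have := hmono _ _ h hIi; omega
  · -- image of g
    apply Set.Subset.antisymm
    · rintro y ⟨i, hi, rfl⟩
      rw [Set.mem_Icc] at hi
      by_cases hit : i ≤ t + 1
      · rw [hg1 i hit]
        exact ⟨q (i-1), hq_mem (i-1), rfl⟩
      · rw [hg2 i (by omega)]
        exact ⟨a (i - (t+1)), (hgood _ (by omega) (by omega)).1, rfl⟩
    · rintro y ⟨x, hx, rfl⟩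
      by_cases hxc : ∃ k, k ≤ t ∧ q k = x
      · obtain ⟨k, hk, rfl⟩ := hxc
        refine ⟨k + 1, Set.mem_Icc.mpr ⟨by omega, by omega⟩, ?_⟩
        rw [hg1 (k+1) (by omega)]
        norm_num
      · push_neg at hxc
        have hInRx : InR x := ⟨hx, fun k hk => hxc k hk⟩
        obtain ⟨k, hk1, hk2, rfl⟩ := hcoverbd x hInRx
        refine ⟨k + (t+1), Set.mem_Icc.mpr ⟨by omega, by omega⟩, ?_⟩
        rw [hg2 _ (by omega)]
        norm_num
  · -- the single inducing sequence
    intro i hi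
    rw [Set.mem_Icc] at hi
    by_cases hit : i ≤ t + 1
    · rw [hg1 i hit, hg1 (i-1) (by omega)]
      have h2 : i - 1 - 1 = i - 2 := by omega
      have h1 : i - 1 = i - 2 + 1 := by omega
      rw [h2, h1, hch (i-2) (by omega)]
      exact hM1 (i-2) (by omega)
    · by_cases hieq : i = t + 2
      · subst hieq
        rw [hg2 (t+2) (by omega), hg1 (t+2-1) (by omega)]
        rw [show t + 2 - (t+1) = 1 by omega, show t + 2 - 1 - 1 = t by omega, hqt]
        have hInR1 : InR (a 1) := hgood 1 (le_refl 1) (by omega)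
        have hJ1 : J (a 1) = 1 := by
          have h := haJ 0 (by rw [zero_add]; exact hInR1)
          rwa [zero_add, ha0] at h
        have hnCh : ∀ k, k < t → s(r, f (a 1)) ≠ s(r, f (q (k+1))) := by
          intro k hk he
          have := hs_ne _ _ hInR1.1 (hq_mem (k+1)) he
          exact hInR1.2 (k+1) (by omega) this.symm
        rw [hnc _ hnCh]
        have hm := (hJspec (a 1) (hInR2 _ hInR1)).2
        rw [hJ1] at hm
        refine hM2 _ hm ?_
        refine hcinj (a 1) (q (t-1)) (hInR2 _ hInR1) (hq2 (t-1) (by omega)) ?_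
        intro he
        exact hInR1.2 (t-1) (by omega) he.symm
      · rw [hg2 i (by omega), hg2 (i-1) (by omega)]
        have hk2 : 2 ≤ i - (t+1) := by omega
        have hIa : InR (a (i - (t+1))) := hgood _ (by omega) (by omega)
        have hIa' : InR (a (i - (t+1) - 1)) := hgood _ (by omega) (by omega)
        rw [show i - 1 - (t+1) = i - (t+1) - 1 by omega]
        have hJa : J (a (i - (t+1))) = a (i - (t+1) - 1) := by
          have h := haJ (i - (t+1) - 1) (by rw [show i - (t+1) - 1 + 1 = i - (t+1) by omega]; exact hIa)
          rwa [show i - (t+1) - 1 + 1 = i - (t+1) by omega] at h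
        have hnCh : ∀ k, k < t → s(r, f (a (i - (t+1)))) ≠ s(r, f (q (k+1))) := by
          intro k hk he
          have := hs_ne _ _ hIa.1 (hq_mem (k+1)) he
          exact hIa.2 (k+1) (by omega) this.symm
        rw [hnc _ hnCh]
        have hm := (hJspec (a (i - (t+1))) (hInR2 _ hIa)).2
        rw [hJa] at hm
        exact hM3 (a (i - (t+1) - 1)) (hInR2 _ hIa') (fun k hk he => hIa'.2 k hk he) _ hm
end
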